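/- arXiv:math/0605455 — 7 statements merged into one kernel-verified Lean document; each statement's English description precedes it below -/
import Mathlib

section
/- Let ℓ ≥ 6 be an integer and m ≥ 1. Let λ = [λ₁,λ₂] be a Young diagram in Λ(m,ℓ) and set ν₁ = 2λ₁ − m. Then the number of oscillating tableaux in 𝒪_ℓ(m,[ν₁]) equals the binomial coefficient C(|𝒯_ℓ(λ)| + 1, 2). -/
/-- `AddBox μ ν` means `ν` is obtained from `μ` by adding a single box (`μ → ν`). -/
def AddBox (μ ν : YoungDiagram) : Prop := μ ≤ ν ∧ ν.card = μ.card + 1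

/-- `AdjBox μ ν` means `μ ↔ ν`, i.e. the diagrams differ by a single box. -/
def AdjBox (μ ν : YoungDiagram) : Prop := AddBox μ ν ∨ AddBox ν μ

/-- `RowsEq μ L` means the row lengths of `μ` are given by the list `L`
(rows beyond the length of `L` being empty). -/
def RowsEq (μ : YoungDiagram) (L : List ℕ) : Prop := ∀ i, μ.rowLen i = L.getD i 0

/-- `Λ(j,ℓ)`: Young diagrams of size `j` with at most two rows whose
row difference is at most `ℓ - 2`. -/
def LambdaSet (j ℓ : ℕ) : Set YoungDiagram :=
  {μ | μ.card = j ∧ μ.rowLen 2 = 0 ∧ μ.rowLen 0 - μ.rowLen 1 ≤ ℓ - 2}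

/-- `Γ(ℓ)` for a finite `ℓ ≥ 6`. -/
def GammaSet (ℓ : ℕ) : Set YoungDiagram :=
  {μ | μ.colLen 0 + μ.colLen 1 ≤ 4 ∧ μ.rowLen 0 + μ.rowLen 1 ≤ ℓ - 2}
    ∪ {μ | RowsEq μ [ℓ - 2, 1, 1]}

/-- `Γ(∞)`: diagrams whose first two column lengths sum to at most `4`. -/
def GammaInf : Set YoungDiagram := {μ | μ.colLen 0 + μ.colLen 1 ≤ 4}

/-- A Young-tableau path of length `m`, with the `j`-th shape restricted to lie in `P j`. -/
def IsTabPath (P : ℕ → Set YoungDiagram) (m : ℕ) (f : Fin (m + 1) → YoungDiagram) : Prop :=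
  f 0 = ⊥ ∧ (∀ j : Fin m, AddBox (f j.castSucc) (f j.succ)) ∧
    ∀ j : Fin (m + 1), f j ∈ P (j : ℕ)

/-- An oscillating-tableau path of length `m` with all shapes in `Γ`. -/
def IsOscPath (Γ : Set YoungDiagram) (m : ℕ) (f : Fin (m + 1) → YoungDiagram) : Prop :=
  f 0 = ⊥ ∧ (∀ j : Fin m, AdjBox (f j.castSucc) (f j.succ)) ∧
    ∀ j : Fin (m + 1), f j ∈ Γ

/-- The number of Young tableaux (paths) of length `m`, with shapes restricted by `P`,
whose final shape has row lengths `L`. -/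
noncomputable def tabCount (P : ℕ → Set YoungDiagram) (m : ℕ) (L : List ℕ) : ℕ :=
  Nat.card {f : Fin (m + 1) → YoungDiagram //
    IsTabPath P m f ∧ RowsEq (f (Fin.last m)) L}

/-- The number of oscillating tableaux of length `m` with shapes in `Γ`
whose final shape has row lengths `L`. -/
noncomputable def oscCount (Γ : Set YoungDiagram) (m : ℕ) (L : List ℕ) : ℕ :=
  Nat.card {f : Fin (m + 1) → YoungDiagram //
    IsOscPath Γ m f ∧ RowsEq (f (Fin.last m)) L}

/-- The number of oscillating tableaux of length `m` with shapes in `Γ` and final shape `ν`. -/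
noncomputable def oscCountD (Γ : Set YoungDiagram) (m : ℕ) (ν : YoungDiagram) : ℕ :=
  Nat.card {f : Fin (m + 1) → YoungDiagram //
    IsOscPath Γ m f ∧ f (Fin.last m) = ν}

/-!
Both counts obey the transfer recursion: the number of admissible paths of length `m + 1` ending
at `ν` is the sum, over the admissible neighbours `μ` of `ν`, of the number of admissible paths of
length `m` ending at `μ`. All shapes in `Λ(j,ℓ)` and `Γ(ℓ)` have at most four rows, so the
recursion can be run on row-length vectors `(p, q, r, s)`.

Let `d_m(x)` be the number of walks of length `m` from `0` to `x` on the path `0 — 1 — ⋯ — ℓ-2`.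
Along a tableau through `Λ(·,ℓ)` the row difference performs such a walk, so
`|𝒯_ℓ([p,q])| = d_m(p-q)`. The oscillating count is the symmetric square of `d_m`:
`C(d_m(p)+1, 2)` at `[p]`, `d_m(p-q) d_m(p+q)` at `[p,q]`, `C(d_m(p), 2)` at `[p,1,1]`,
`C(d_m(0), 2)` at `[1,1,1,1]` and `0` elsewhere. For an arbitrary `d`, these expressions at the
walk step of `d` are the sums of the expressions at `d` over all neighbours with at most four rows,
by `C(u+v, 2) = C(u,2) + C(v,2) + uv` and `C(u+1, 2) + C(u, 2) = u²`; and for `d = d_m`, which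
vanishes beyond `ℓ - 2`, they vanish outside `Γ(ℓ)`. Evaluating at `[λ₁, λ₂]` and `[λ₁ - λ₂]`
gives the theorem.
-/

namespace YoungDiagram

theorem ext_of_rowLen {μ ν : YoungDiagram} (h : ∀ i, μ.rowLen i = ν.rowLen i) : μ = ν := by
  ext ⟨i, j⟩
  simp only [mem_cells, mem_iff_lt_rowLen, h]

theorem le_iff_rowLen_le {μ ν : YoungDiagram} : μ ≤ ν ↔ ∀ i, μ.rowLen i ≤ ν.rowLen i := by
  refine ⟨fun h i => ?_, fun h ⟨i, j⟩ hc => ?_⟩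
  · by_contra! hlt
    have := mem_iff_lt_rowLen.1 (h (mem_iff_lt_rowLen.2 hlt))
    omega
  · exact mem_iff_lt_rowLen.2 ((mem_iff_lt_rowLen.1 hc).trans_le (h i))

theorem colLen_le_iff {μ : YoungDiagram} {j k : ℕ} : μ.colLen j ≤ k ↔ μ.rowLen k ≤ j := by
  rw [← not_lt, ← not_lt, ← mem_iff_lt_colLen, mem_iff_lt_rowLen]

theorem rowLen_bot (i : ℕ) : (⊥ : YoungDiagram).rowLen i = 0 :=
  Nat.eq_zero_of_not_pos fun h => notMem_bot _ (mem_iff_lt_rowLen.2 h)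

theorem rowLen_ofRowLens_eq_getD {w : List ℕ} {hw : w.SortedGE} (i : ℕ) :
    (ofRowLens w hw).rowLen i = w.getD i 0 := by
  refine eq_of_forall_lt_iff fun j => ?_
  rw [← mem_iff_lt_rowLen, mem_ofRowLens]
  by_cases hi : i < w.length <;> simp [hi]

theorem card_ofRowLens {w : List ℕ} {hw : w.SortedGE} : (ofRowLens w hw).card = w.sum := by
  change (YoungDiagram.cellsOfRowLens w).card = w.sum
  clear hw
  induction w with
  | nil => rfl
  | cons x w ih =>
    rw [YoungDiagram.cellsOfRowLens, Finset.card_union_of_disjoint, Finset.card_map, ih]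
    · simp
    · rw [Finset.disjoint_left]
      rintro ⟨i, j⟩ hx hy
      simp only [Finset.mem_product, Finset.mem_singleton] at hx
      simp only [Finset.mem_map, Function.Embedding.coe_prodMap] at hy
      obtain ⟨⟨u, v⟩, -, he⟩ := hy
      simp only [Prod.map, Prod.mk.injEq, Function.Embedding.coeFn_mk] at he
      omega

end YoungDiagram

section Paths

variable {R : YoungDiagram → YoungDiagram → Prop} {Q : ℕ → Set YoungDiagram} {m : ℕ}
  {μ ν : YoungDiagram}

variable (R Q) in
def IsShapePath (m : ℕ) (f : Fin (m + 1) → YoungDiagram) : Prop :=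
  f 0 = ⊥ ∧ (∀ j : Fin m, R (f j.castSucc) (f j.succ)) ∧ ∀ j : Fin (m + 1), f j ∈ Q j

variable (R Q) in
abbrev ShapePathsTo (m : ℕ) (ν : YoungDiagram) : Type :=
  {f : Fin (m + 1) → YoungDiagram // IsShapePath R Q m f ∧ f (Fin.last m) = ν}

theorem isEmpty_shapePathsTo (hν : ν ∉ Q m) : IsEmpty (ShapePathsTo R Q m ν) :=
  ⟨fun f => hν (f.2.2 ▸ by simpa using f.2.1.2.2 (Fin.last m))⟩

instance : Subsingleton (ShapePathsTo R Q 0 ν) :=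
  ⟨fun f g => Subtype.ext <| funext fun j => by rw [Fin.fin_one_eq_zero j, f.2.1.1, g.2.1.1]⟩

open scoped Classical in
theorem card_shapePathsTo_zero (hν : ν ∈ Q 0) :
    Nat.card (ShapePathsTo R Q 0 ν) = if ν = ⊥ then 1 else 0 := by
  split_ifs with h
  · subst h
    have : Nonempty (ShapePathsTo R Q 0 ⊥) :=
      ⟨⟨fun _ => ⊥, ⟨rfl, Fin.elim0, fun j => by rwa [Fin.fin_one_eq_zero j]⟩, rfl⟩⟩
    exact Nat.card_unique
  · have : IsEmpty (ShapePathsTo R Q 0 ν) := ⟨fun f => h (f.2.2.symm.trans f.2.1.1)⟩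
    exact Nat.card_of_isEmpty

def shapePathsToSuccFiberEquiv (hν : ν ∈ Q (m + 1)) (hμ : R μ ν) :
    {f : ShapePathsTo R Q (m + 1) ν // f.1 (Fin.last m).castSucc = μ} ≃ ShapePathsTo R Q m μ where
  toFun f := ⟨Fin.init f.1.1,
    ⟨f.1.2.1.1, fun j => f.1.2.1.2.1 j.castSucc, fun j => f.1.2.1.2.2 j.castSucc⟩, f.2⟩
  invFun g := ⟨⟨Fin.snoc g.1 ν, ⟨(Fin.snoc_castSucc (i := 0) ..).trans g.2.1.1,
      Fin.lastCases (by simpa [g.2.2] using hμ) fun j => by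
        rw [Fin.succ_castSucc, Fin.snoc_castSucc, Fin.snoc_castSucc]
        exact g.2.1.2.1 j,
      Fin.lastCases (by simpa using hν) fun j => by simpa using g.2.1.2.2 j⟩,
    Fin.snoc_last ..⟩, by simpa using g.2.2⟩
  left_inv f := by
    ext : 2
    simp [← f.1.2.2]
  right_inv g := by
    ext : 1
    simp

def shapePathsToSuccEquiv (hν : ν ∈ Q (m + 1)) (S : Finset YoungDiagram)
    (hS : ∀ μ ∈ S, R μ ν) (hcover : ∀ μ, R μ ν → μ ∈ Q m → μ ∈ S) :
    ShapePathsTo R Q (m + 1) ν ≃ Σ μ : S, ShapePathsTo R Q m μ :=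
  let last (f : ShapePathsTo R Q (m + 1) ν) : S :=
    ⟨f.1 (Fin.last m).castSucc, hcover _ (by simpa [f.2.2] using f.2.1.2.1 (Fin.last m))
      (by simpa using f.2.1.2.2 (Fin.last m).castSucc)⟩
  (Equiv.sigmaFiberEquiv last).symm.trans <| Equiv.sigmaCongrRight fun μ =>
    (Equiv.subtypeEquivRight fun _ => Subtype.ext_iff).trans
      (shapePathsToSuccFiberEquiv hν (hS μ μ.2))

open scoped Classical in
theorem card_shapePathsTo_eq (F : ℕ → YoungDiagram → ℕ)
    (hF₀ : ∀ ν, F 0 ν = if ν = ⊥ then 1 else 0) (hF : ∀ m ν, ν ∉ Q m → F m ν = 0)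
    (hsucc : ∀ m ν, ν ∈ Q (m + 1) → ∃ S : Finset YoungDiagram, (∀ μ ∈ S, R μ ν) ∧
      (∀ μ, R μ ν → μ ∈ Q m → μ ∈ S) ∧ F (m + 1) ν = ∑ μ ∈ S, F m μ)
    (m : ℕ) (ν : YoungDiagram) : Nat.card (ShapePathsTo R Q m ν) = F m ν := by
  -- `Nat.card` of an infinite type is `0`, so finiteness has to be carried along the induction.
  suffices ∀ ν, Finite (ShapePathsTo R Q m ν) ∧ Nat.card (ShapePathsTo R Q m ν) = F m ν from
    (this ν).2
  induction m with
  | zero =>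
    intro ν
    by_cases hν : ν ∈ Q 0
    · exact ⟨inferInstance, by rw [card_shapePathsTo_zero hν, hF₀]⟩
    · have := isEmpty_shapePathsTo (R := R) hν
      exact ⟨inferInstance, by rw [Nat.card_of_isEmpty, hF 0 ν hν]⟩
  | succ m ih =>
    intro ν
    by_cases hν : ν ∈ Q (m + 1)
    · obtain ⟨S, hS, hcover, hFS⟩ := hsucc m ν hν
      have := fun μ => (ih μ).1
      let e := shapePathsToSuccEquiv hν S hS hcover
      refine ⟨Finite.of_equiv _ e.symm, ?_⟩
      rw [Nat.card_congr e, Nat.card_sigma, hFS, ← Finset.sum_coe_sort S]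
      exact Finset.sum_congr rfl fun μ _ => (ih μ).2
    · have := isEmpty_shapePathsTo (R := R) hν
      exact ⟨inferInstance, by rw [Nat.card_of_isEmpty, hF (m + 1) ν hν]⟩

end Paths

open YoungDiagram

abbrev Rows4 := ℕ × ℕ × ℕ × ℕ

def Sorted4 : Rows4 → Prop
  | (p, q, r, s) => q ≤ p ∧ r ≤ q ∧ s ≤ r

def rows4 (μ : YoungDiagram) : Rows4 := (μ.rowLen 0, μ.rowLen 1, μ.rowLen 2, μ.rowLen 3)

/-- The `min`s make the list weakly decreasing, so `ofRows4` is total; on `Sorted4` vectors they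
do nothing. -/
def ofRows4 : Rows4 → YoungDiagram
  | (p, q, r, s) =>
    ofRowLens [p, min p q, min (min p q) r, min (min (min p q) r) s] <| by
      simp [List.sortedGE_iff_pairwise]

def AddRows4 : Rows4 → Rows4 → Prop
  | (p, q, r, s), (p', q', r', s') =>
    p ≤ p' ∧ q ≤ q' ∧ r ≤ r' ∧ s ≤ s' ∧ p' + q' + r' + s' = p + q + r + s + 1

def AdjRows4 (u t : Rows4) : Prop := AddRows4 u t ∨ AddRows4 t u

theorem rowLen_ofRows4 {p q r s : ℕ} (h : Sorted4 (p, q, r, s)) (i : ℕ) :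
    (ofRows4 (p, q, r, s)).rowLen i = [p, q, r, s].getD i 0 := by
  obtain ⟨h₁, h₂, h₃⟩ := h
  rw [ofRows4, rowLen_ofRowLens_eq_getD, min_eq_right h₁, min_eq_right h₂, min_eq_right h₃]

theorem rowLen_ofRows4_of_le (u : Rows4) {i : ℕ} (hi : 4 ≤ i) : (ofRows4 u).rowLen i = 0 := by
  obtain ⟨p, q, r, s⟩ := u
  rw [ofRows4, rowLen_ofRowLens_eq_getD, List.getD_eq_default _ _ (by simpa using hi)]

theorem sorted4_rows4 (μ : YoungDiagram) : Sorted4 (rows4 μ) :=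
  ⟨μ.rowLen_anti 0 1 (by omega), μ.rowLen_anti 1 2 (by omega), μ.rowLen_anti 2 3 (by omega)⟩

theorem rows4_ofRows4 {u : Rows4} (h : Sorted4 u) : rows4 (ofRows4 u) = u := by
  obtain ⟨p, q, r, s⟩ := u
  simp [rows4, rowLen_ofRows4 h]

theorem ofRows4_rows4 {μ : YoungDiagram} (h : μ.rowLen 4 = 0) : ofRows4 (rows4 μ) = μ := by
  refine ext_of_rowLen fun i => ?_
  rcases Nat.lt_or_ge i 4 with hi | hi
  · rw [rows4, rowLen_ofRows4 (sorted4_rows4 μ)]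
    interval_cases i <;> rfl
  · rw [rowLen_ofRows4_of_le _ hi]
    exact (Nat.eq_zero_of_le_zero (h ▸ μ.rowLen_anti 4 i hi)).symm

theorem ofRows4_injOn : Set.InjOn ofRows4 {u | Sorted4 u} := fun u hu v hv h => by
  rw [← rows4_ofRows4 hu, ← rows4_ofRows4 hv, h]

theorem ofRows4_zero : ofRows4 0 = ⊥ :=
  ext_of_rowLen fun i => by
    rw [rowLen_bot, show (0 : Rows4) = (0, 0, 0, 0) from rfl, rowLen_ofRows4 (by simp [Sorted4])]
    rcases i with _ | _ | _ | _ | i <;> rfl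

theorem card_ofRows4 {p q r s : ℕ} (h : Sorted4 (p, q, r, s)) :
    (ofRows4 (p, q, r, s)).card = p + q + r + s := by
  obtain ⟨h₁, h₂, h₃⟩ := h
  rw [ofRows4, card_ofRowLens, min_eq_right h₁, min_eq_right h₂, min_eq_right h₃]
  simp [add_assoc]

theorem YoungDiagram.card_eq_sum_rows4 {μ : YoungDiagram} (h : μ.rowLen 4 = 0) :
    μ.card = μ.rowLen 0 + μ.rowLen 1 + μ.rowLen 2 + μ.rowLen 3 := by
  conv_lhs => rw [← ofRows4_rows4 h]
  exact card_ofRows4 (sorted4_rows4 μ)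

theorem ofRows4_le_ofRows4_iff {p q r s p' q' r' s' : ℕ} (h : Sorted4 (p, q, r, s))
    (h' : Sorted4 (p', q', r', s')) :
    ofRows4 (p, q, r, s) ≤ ofRows4 (p', q', r', s') ↔ p ≤ p' ∧ q ≤ q' ∧ r ≤ r' ∧ s ≤ s' := by
  simp only [le_iff_rowLen_le, rowLen_ofRows4 h, rowLen_ofRows4 h']
  refine ⟨fun hle => ⟨hle 0, hle 1, hle 2, hle 3⟩, fun hle i => ?_⟩
  rcases i with _ | _ | _ | _ | i <;> simp [hle]

theorem addBox_ofRows4_iff {u t : Rows4} (hu : Sorted4 u) (ht : Sorted4 t) :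
    AddBox (ofRows4 u) (ofRows4 t) ↔ AddRows4 u t := by
  obtain ⟨p, q, r, s⟩ := u
  obtain ⟨p', q', r', s'⟩ := t
  rw [AddBox, ofRows4_le_ofRows4_iff hu ht, card_ofRows4 hu, card_ofRows4 ht, AddRows4]
  simp only [and_assoc]

theorem adjBox_ofRows4_iff {u t : Rows4} (hu : Sorted4 u) (ht : Sorted4 t) :
    AdjBox (ofRows4 u) (ofRows4 t) ↔ AdjRows4 u t := by
  rw [AdjBox, AdjRows4, addBox_ofRows4_iff hu ht, addBox_ofRows4_iff ht hu]

/-- At a zero entry the truncated decrement gives back `t` itself, which is never adjacent to `t`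
(`AdjRows4.ne`). -/
def unitMoves : Rows4 → List Rows4
  | (p, q, r, s) =>
    [(p + 1, q, r, s), (p, q + 1, r, s), (p, q, r + 1, s), (p, q, r, s + 1)] ++
    [(p - 1, q, r, s), (p, q - 1, r, s), (p, q, r - 1, s), (p, q, r, s - 1)]

theorem AddRows4.mem_unitMoves {u t : Rows4} (h : AddRows4 u t) : u ∈ unitMoves t := by
  obtain ⟨p, q, r, s⟩ := u
  obtain ⟨p', q', r', s'⟩ := t
  obtain ⟨hp, hq, hr, hs, hsum⟩ := h
  simp only [unitMoves, List.mem_append, List.mem_cons, Prod.mk.injEq, List.not_mem_nil, or_false]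
  right
  omega

theorem AddRows4.mem_unitMoves' {u t : Rows4} (h : AddRows4 t u) : u ∈ unitMoves t := by
  obtain ⟨p, q, r, s⟩ := u
  obtain ⟨p', q', r', s'⟩ := t
  obtain ⟨hp, hq, hr, hs, hsum⟩ := h
  simp only [unitMoves, List.mem_append, List.mem_cons, Prod.mk.injEq, List.not_mem_nil, or_false]
  left
  omega

theorem AdjRows4.mem_unitMoves {u t : Rows4} (h : AdjRows4 u t) : u ∈ unitMoves t :=
  h.elim AddRows4.mem_unitMoves AddRows4.mem_unitMoves'

theorem AdjRows4.ne {u t : Rows4} (h : AdjRows4 u t) : u ≠ t := by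
  obtain ⟨p, q, r, s⟩ := u
  rintro rfl
  rcases h with ⟨-, -, -, -, h⟩ | ⟨-, -, -, -, h⟩ <;> omega

theorem pairwise_unitMoves (t : Rows4) :
    (unitMoves t).Pairwise fun u v => u ≠ t → v ≠ t → u ≠ v := by
  obtain ⟨p, q, r, s⟩ := t
  simp [unitMoves]
  and_intros <;> omega

theorem nodup_filter_unitMoves {t : Rows4} {c : Rows4 → Bool} (hc : ∀ u, c u → u ≠ t) :
    ((unitMoves t).filter c).Nodup :=
  List.pairwise_filter.2 <| (pairwise_unitMoves t).imp fun h hu hv => h (hc _ hu) (hc _ hv)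

open scoped Classical in
noncomputable def predSum (r : Rows4 → Rows4 → Prop) (g : Rows4 → ℕ) (t : Rows4) : ℕ :=
  ((unitMoves t).map fun u => if Sorted4 u ∧ r u t then g u else 0).sum

open scoped Classical in
theorem predSum_eq_sum_filter (r : Rows4 → Rows4 → Prop) (g : Rows4 → ℕ) (t : Rows4) :
    predSum r g t = (((unitMoves t).filter fun u => Sorted4 u ∧ r u t).map g).sum := by
  rw [predSum, List.sum_map_ite]
  simp

theorem exists_finset_sum_eq_predSum {R : YoungDiagram → YoungDiagram → Prop}
    {Q : Set YoungDiagram} (r : Rows4 → Rows4 → Prop) (hr : ∀ u t, r u t → AdjRows4 u t)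
    (hR : ∀ u t, Sorted4 u → Sorted4 t → (R (ofRows4 u) (ofRows4 t) ↔ r u t))
    (hQ : ∀ μ ∈ Q, ∃ u, Sorted4 u ∧ ofRows4 u = μ) (F : YoungDiagram → ℕ) (f : Rows4 → ℕ)
    (hF : ∀ u, Sorted4 u → F (ofRows4 u) = f u) {t : Rows4} (ht : Sorted4 t) :
    ∃ S : Finset YoungDiagram, (∀ μ ∈ S, R μ (ofRows4 t)) ∧
      (∀ μ, R μ (ofRows4 t) → μ ∈ Q → μ ∈ S) ∧ predSum r f t = ∑ μ ∈ S, F μ := by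
  classical
  set L := (unitMoves t).filter fun u => Sorted4 u ∧ r u t
  have hL : L.Nodup :=
    nodup_filter_unitMoves fun u hu => (hr u t (of_decide_eq_true hu).2).ne
  have hmem : ∀ u, u ∈ L ↔ Sorted4 u ∧ r u t := fun u => by
    simpa [L] using fun _ h => (hr u t h).mem_unitMoves
  refine ⟨(L.map ofRows4).toFinset, ?_, ?_, ?_⟩
  · simp only [List.mem_toFinset, List.mem_map, hmem]
    rintro _ ⟨u, ⟨hu, hut⟩, rfl⟩
    exact (hR u t hu ht).2 hut
  · intro μ hμt hμ
    obtain ⟨u, hu, rfl⟩ := hQ μ hμ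
    simp only [List.mem_toFinset, List.mem_map, hmem]
    exact ⟨u, ⟨hu, (hR u t hu ht).1 hμt⟩, rfl⟩
  · rw [predSum_eq_sum_filter, List.sum_toFinset _ (hL.map_on fun u hu v hv =>
      ofRows4_injOn ((hmem u).1 hu).1 ((hmem v).1 hv).1), List.map_map]
    exact congrArg List.sum (List.map_congr_left fun u hu => (hF u ((hmem u).1 hu).1).symm)

open scoped Classical in
theorem card_shapePathsTo_ofRows4 {R : YoungDiagram → YoungDiagram → Prop}
    {Q : ℕ → Set YoungDiagram} (r : Rows4 → Rows4 → Prop) (P : ℕ → Rows4 → Prop)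
    (hr : ∀ u t, r u t → AdjRows4 u t)
    (hR : ∀ u t, Sorted4 u → Sorted4 t → (R (ofRows4 u) (ofRows4 t) ↔ r u t))
    (hQ : ∀ m μ, μ ∈ Q m ↔ ∃ u, Sorted4 u ∧ P m u ∧ ofRows4 u = μ)
    (f : ℕ → Rows4 → ℕ) (hf₀ : ∀ u, Sorted4 u → f 0 u = if u = 0 then 1 else 0)
    (hf : ∀ m u, Sorted4 u → ¬P m u → f m u = 0)
    (hsucc : ∀ m t, Sorted4 t → P (m + 1) t → f (m + 1) t = predSum r (f m) t)
    (m : ℕ) {t : Rows4} (ht : Sorted4 t) :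
    Nat.card (ShapePathsTo R Q m (ofRows4 t)) = f m t := by
  set F : ℕ → YoungDiagram → ℕ := fun m μ => if μ.rowLen 4 = 0 then f m (rows4 μ) else 0
  have hF : ∀ m u, Sorted4 u → F m (ofRows4 u) = f m u := fun m u hu => by
    simp [F, rowLen_ofRows4_of_le, rows4_ofRows4 hu]
  rw [card_shapePathsTo_eq F ?_ ?_ ?_ m, hF m t ht]
  · intro ν
    by_cases h4 : ν.rowLen 4 = 0
    · have : rows4 ν = 0 ↔ ν = ⊥ := by
        refine ⟨fun h => ?_, fun h => by simp [h, rows4, rowLen_bot]⟩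
        rw [← ofRows4_rows4 h4, h, ofRows4_zero]
      simp only [F, if_pos h4, hf₀ _ (sorted4_rows4 ν), this]
    · have : ν ≠ ⊥ := fun h => h4 (h ▸ rowLen_bot 4)
      simp [F, h4, this]
  · intro m ν hν
    by_cases h4 : ν.rowLen 4 = 0
    · simp only [F, if_pos h4]
      exact hf _ _ (sorted4_rows4 ν) fun hP =>
        hν ((hQ m ν).2 ⟨_, sorted4_rows4 ν, hP, ofRows4_rows4 h4⟩)
    · simp [F, h4]
  · intro m ν hν
    obtain ⟨t, ht, hPt, rfl⟩ := (hQ _ _).1 hν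
    rw [hF _ t ht, hsucc m t ht hPt]
    exact exists_finset_sum_eq_predSum r hr hR
      (fun μ hμ => let ⟨u, hu, _, hμ⟩ := (hQ m μ).1 hμ; ⟨u, hu, hμ⟩) (F m) (f m) (hF m) ht

def pathStep (n : ℕ) (d : ℕ → ℕ) : ℕ → ℕ
  | 0 => d 1
  | x + 1 => if x + 1 ≤ n then d x + d (x + 2) else 0

/-- `pathWalks n m x` is the number of walks of length `m` from `0` to `x` on the path graph
`0 — 1 — ⋯ — n`. -/
def pathWalks (n : ℕ) : ℕ → ℕ → ℕ
  | 0 => fun x => if x = 0 then 1 else 0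
  | m + 1 => pathStep n (pathWalks n m)

section Walks

variable {n m x : ℕ} {d : ℕ → ℕ}

@[simp]
theorem pathStep_zero : pathStep n d 0 = d 1 := rfl

theorem pathStep_of_pos (h0 : 0 < x) (hn : x ≤ n) : pathStep n d x = d (x - 1) + d (x + 1) := by
  obtain ⟨y, rfl⟩ : ∃ y, x = y + 1 := ⟨x - 1, by omega⟩
  simp [pathStep, hn]

theorem pathWalks_succ : pathWalks n (m + 1) = pathStep n (pathWalks n m) := rfl

theorem pathWalks_of_lt (h : n < x) : pathWalks n m x = 0 := by
  obtain ⟨y, rfl⟩ : ∃ y, x = y + 1 := ⟨x - 1, by omega⟩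
  cases m <;> simp [pathWalks, pathStep, show ¬y + 1 ≤ n by omega]

theorem pathWalks_of_length_lt (h : m < x) : pathWalks n m x = 0 := by
  induction m generalizing x with
  | zero => simp [pathWalks]; omega
  | succ m ih =>
    obtain ⟨y, rfl⟩ : ∃ y, x = y + 1 := ⟨x - 1, by omega⟩
    simp [pathWalks, pathStep, ih (x := y) (by omega), ih (x := y + 2) (by omega)]

end Walks


section Tableaux

variable {n m : ℕ}

def LambdaRows (n j : ℕ) : Rows4 → Prop
  | (p, q, r, _) => r = 0 ∧ p + q = j ∧ p - q ≤ n

def tabWeight (n m : ℕ) : Rows4 → ℕ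
  | (p, q, r, _) => if r = 0 ∧ p + q = m then pathWalks n m (p - q) else 0

theorem mem_lambdaSet_iff {ℓ j : ℕ} {μ : YoungDiagram} :
    μ ∈ LambdaSet j ℓ ↔ ∃ u, Sorted4 u ∧ LambdaRows (ℓ - 2) j u ∧ ofRows4 u = μ := by
  constructor
  · rintro ⟨hcard, h2, hdiff⟩
    have h3 := μ.rowLen_anti 2 3 (by omega)
    have h4 := μ.rowLen_anti 2 4 (by omega)
    have hcard' := card_eq_sum_rows4 (μ := μ) (by omega)
    exact ⟨rows4 μ, sorted4_rows4 μ, ⟨h2, by omega, hdiff⟩, ofRows4_rows4 (by omega)⟩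
  · rintro ⟨⟨p, q, r, s⟩, hu, ⟨rfl, hpq, hd⟩, rfl⟩
    have := hu.2.2
    simp [LambdaSet, rowLen_ofRows4 hu, card_ofRows4 hu]
    omega

theorem tabWeight_zero {u : Rows4} (hu : Sorted4 u) :
    tabWeight n 0 u = if u = 0 then 1 else 0 := by
  obtain ⟨p, q, r, s⟩ := u
  have := hu.2.2
  simp only [tabWeight, pathWalks, Prod.mk_eq_zero]
  split_ifs <;> omega

theorem tabWeight_eq_zero {u : Rows4} (hu : ¬LambdaRows n m u) : tabWeight n m u = 0 := by
  obtain ⟨p, q, r, s⟩ := u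
  simp only [LambdaRows, not_and, not_le] at hu
  simp only [tabWeight]
  split_ifs with h
  · exact pathWalks_of_lt (hu h.1 h.2)
  · rfl

theorem tabWeight_succ {t : Rows4} (ht : Sorted4 t) (hP : LambdaRows n (m + 1) t) :
    tabWeight n (m + 1) t = predSum AddRows4 (tabWeight n m) t := by
  obtain ⟨p, q, r, s⟩ := t
  obtain ⟨rfl, hpq, hd⟩ := hP
  obtain rfl : s = 0 := by have := ht.2.2; omega
  obtain rfl | hq := Nat.eq_zero_or_pos q
  · simp (disch := omega) [tabWeight, predSum, unitMoves, Sorted4, AddRows4, pathWalks_succ,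
      pathStep_of_pos, pathWalks_of_length_lt, if_pos]
  obtain hqp | rfl := ht.1.lt_or_eq
  · simp (disch := omega) [tabWeight, predSum, unitMoves, Sorted4, AddRows4, pathWalks_succ,
      pathStep_of_pos, if_pos]
    grind
  · simp (disch := omega) [tabWeight, predSum, unitMoves, Sorted4, AddRows4, pathWalks_succ,
      if_pos]
    grind

theorem card_tabPaths {ℓ : ℕ} {t : Rows4} (ht : Sorted4 t) :
    Nat.card (ShapePathsTo AddBox (fun j => LambdaSet j ℓ) m (ofRows4 t)) =
      tabWeight (ℓ - 2) m t :=
  card_shapePathsTo_ofRows4 AddRows4 (fun j => LambdaRows (ℓ - 2) j) (fun _ _ => Or.inl)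
    (fun _ _ => addBox_ofRows4_iff) (fun _ _ => mem_lambdaSet_iff) _ (fun _ => tabWeight_zero)
    (fun _ _ _ => tabWeight_eq_zero) (fun _ _ => tabWeight_succ) m ht

end Tableaux

theorem Nat.add_choose_two (u v : ℕ) : (u + v).choose 2 = u.choose 2 + v.choose 2 + u * v := by
  rw [Nat.add_choose_eq]
  simp [Finset.Nat.antidiagonal_succ]
  ring

theorem Nat.add_one_choose_two_add_choose_two (u : ℕ) :
    (u + 1).choose 2 + u.choose 2 = u * u := by
  have h₁ := Nat.add_one_mul_choose_eq u 1
  have h₂ := Nat.choose_succ_succ' u 1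
  simp only [Nat.choose_one_right] at h₁ h₂
  nlinarith

section Oscillating

variable {n : ℕ} {d : ℕ → ℕ}

def GammaRows (n : ℕ) : Rows4 → Prop
  | (p, q, r, s) => (r = 0 ∧ p + q ≤ n) ∨ (q = 1 ∧ r = 1 ∧ s = 0 ∧ p ≤ n) ∨ (p = 1 ∧ s = 1)

theorem exists_of_mem_gammaSet {ℓ : ℕ} {μ : YoungDiagram} (hμ : μ ∈ GammaSet ℓ) :
    ∃ u, Sorted4 u ∧ GammaRows (ℓ - 2) u ∧ ofRows4 u = μ := by
  have hs := sorted4_rows4 μ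
  simp only [rows4, Sorted4] at hs
  rcases hμ with ⟨hcol, hrow⟩ | hrows
  · have c₂ := colLen_le_iff (μ := μ) (j := 0) (k := 2)
    have c₃ := colLen_le_iff (μ := μ) (j := 0) (k := 3)
    have c₄ := colLen_le_iff (μ := μ) (j := 0) (k := 4)
    have d₀ := colLen_le_iff (μ := μ) (j := 1) (k := 0)
    have d₁ := colLen_le_iff (μ := μ) (j := 1) (k := 1)
    refine ⟨rows4 μ, sorted4_rows4 μ, ?_, ofRows4_rows4 (by omega)⟩
    simp only [rows4, GammaRows]
    omega
  · refine ⟨rows4 μ, sorted4_rows4 μ, ?_, ofRows4_rows4 (hrows 4)⟩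
    simp [rows4, GammaRows, hrows 0, hrows 1, hrows 2, hrows 3]

theorem ofRows4_mem_gammaSet {ℓ : ℕ} (hℓ : 4 ≤ ℓ) {u : Rows4} (hu : Sorted4 u)
    (hΓ : GammaRows (ℓ - 2) u) : ofRows4 u ∈ GammaSet ℓ := by
  obtain ⟨p, q, r, s⟩ := u
  have hrow := rowLen_ofRows4 hu
  by_cases hhook : q = 1 ∧ r = 1 ∧ s = 0 ∧ p = ℓ - 2
  · obtain ⟨rfl, rfl, rfl, rfl⟩ := hhook
    right
    intro i
    rcases i with _ | _ | _ | _ | i <;> simp [hrow]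
  · obtain ⟨h₁, h₂, h₃⟩ := hu
    simp only [GammaRows] at hΓ
    have c₂ := colLen_le_iff (μ := ofRows4 (p, q, r, s)) (j := 0) (k := 2)
    have c₃ := colLen_le_iff (μ := ofRows4 (p, q, r, s)) (j := 0) (k := 3)
    have c₄ := colLen_le_iff (μ := ofRows4 (p, q, r, s)) (j := 0) (k := 4)
    have d₀ := colLen_le_iff (μ := ofRows4 (p, q, r, s)) (j := 1) (k := 0)
    have d₁ := colLen_le_iff (μ := ofRows4 (p, q, r, s)) (j := 1) (k := 1)
    have d₂ := colLen_le_iff (μ := ofRows4 (p, q, r, s)) (j := 1) (k := 2)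
    simp only [hrow, List.getD_cons_zero, List.getD_cons_succ, List.getD_nil] at c₂ c₃ c₄ d₀ d₁ d₂
    left
    simp only [Set.mem_ofPred_eq, hrow, List.getD_cons_zero, List.getD_cons_succ]
    omega

theorem mem_gammaSet_iff {ℓ : ℕ} (hℓ : 4 ≤ ℓ) {μ : YoungDiagram} :
    μ ∈ GammaSet ℓ ↔ ∃ u, Sorted4 u ∧ GammaRows (ℓ - 2) u ∧ ofRows4 u = μ :=
  ⟨exists_of_mem_gammaSet, fun ⟨_, hu, hΓ, hμ⟩ => hμ ▸ ofRows4_mem_gammaSet hℓ hu hΓ⟩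

def oscWeight (d : ℕ → ℕ) : Rows4 → ℕ
  | (p, q, r, s) =>
    if q = 0 then (d p + 1).choose 2
    else if r = 0 then d (p - q) * d (p + q)
    else if q = 1 ∧ s = 0 then (d p).choose 2
    else if p = 1 then (d 0).choose 2
    else 0

theorem oscWeight_zero {u : Rows4} (hu : Sorted4 u) :
    oscWeight (pathWalks n 0) u = if u = 0 then 1 else 0 := by
  obtain ⟨p, q, r, s⟩ := u
  obtain ⟨h₁, h₂, h₃⟩ := hu
  simp only [oscWeight, pathWalks, Prod.mk_eq_zero]
  split_ifs <;> first | omega | simp_all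

theorem oscWeight_eq_zero (hd : ∀ x, n < x → d x = 0) {u : Rows4} (hu : Sorted4 u)
    (hΓ : ¬GammaRows n u) : oscWeight d u = 0 := by
  obtain ⟨p, q, r, s⟩ := u
  obtain ⟨h₁, h₂, h₃⟩ := hu
  simp only [GammaRows] at hΓ
  simp only [oscWeight]
  split_ifs
  · simp [hd p (by omega)]
  · simp [hd (p + q) (by omega)]
  · simp [hd p (by omega)]
  · omega
  · rfl

theorem oscWeight_pathStep_row {p : ℕ} (hp : p ≤ n) :
    oscWeight (pathStep n d) (p, 0, 0, 0) = predSum AdjRows4 (oscWeight d) (p, 0, 0, 0) := by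
  obtain rfl | hp₀ := Nat.eq_zero_or_pos p
  · simp (disch := omega) [oscWeight, predSum, unitMoves, Sorted4, AdjRows4, AddRows4, if_pos]
  · simp (disch := omega) [oscWeight, predSum, unitMoves, Sorted4, AdjRows4, AddRows4, if_pos,
      pathStep_of_pos]
    grind [Nat.add_choose_two]

theorem oscWeight_pathStep_twoRow {p q : ℕ} (hq : 0 < q) (hqp : q ≤ p) (hn : p + q ≤ n) :
    oscWeight (pathStep n d) (p, q, 0, 0) = predSum AdjRows4 (oscWeight d) (p, q, 0, 0) := by
  obtain rfl | hq₁ : q = 1 ∨ 1 < q := by omega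
  · obtain rfl | hp := hqp.eq_or_lt
    · simp (disch := omega) [oscWeight, predSum, unitMoves, Sorted4, AdjRows4, AddRows4,
        if_pos, pathStep_of_pos]
      grind [Nat.add_one_choose_two_add_choose_two]
    · simp (disch := omega) [oscWeight, predSum, unitMoves, Sorted4, AdjRows4, AddRows4,
        if_pos, pathStep_of_pos]
      grind [Nat.add_one_choose_two_add_choose_two]
  · obtain rfl | hp := hqp.eq_or_lt
    · simp (disch := omega) [oscWeight, predSum, unitMoves, Sorted4, AdjRows4, AddRows4,
        if_pos, if_neg, pathStep_of_pos]
      grind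
    · simp (disch := omega) [oscWeight, predSum, unitMoves, Sorted4, AdjRows4, AddRows4,
        if_pos, if_neg, pathStep_of_pos]
      grind

theorem oscWeight_pathStep_hook {p : ℕ} (hp : 0 < p) (hn : p ≤ n) :
    oscWeight (pathStep n d) (p, 1, 1, 0) = predSum AdjRows4 (oscWeight d) (p, 1, 1, 0) := by
  obtain rfl | hp₁ : p = 1 ∨ 1 < p := by omega
  · simp (disch := omega) [oscWeight, predSum, unitMoves, Sorted4, AdjRows4, AddRows4,
      if_pos, if_neg, pathStep_of_pos]
    grind [Nat.add_choose_two]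
  · simp (disch := omega) [oscWeight, predSum, unitMoves, Sorted4, AdjRows4, AddRows4,
      if_pos, if_neg, pathStep_of_pos]
    grind [Nat.add_choose_two]

theorem oscWeight_pathStep_column :
    oscWeight (pathStep n d) (1, 1, 1, 1) = predSum AdjRows4 (oscWeight d) (1, 1, 1, 1) := by
  simp (disch := omega) [oscWeight, predSum, unitMoves, Sorted4, AdjRows4, AddRows4, if_neg]

theorem oscWeight_pathStep {t : Rows4} (ht : Sorted4 t) (hΓ : GammaRows n t) :
    oscWeight (pathStep n d) t = predSum AdjRows4 (oscWeight d) t := by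
  obtain ⟨p, q, r, s⟩ := t
  obtain ⟨h₁, h₂, h₃⟩ := ht
  rcases hΓ with ⟨rfl, hn⟩ | ⟨rfl, rfl, rfl, hn⟩ | ⟨rfl, rfl⟩
  · obtain rfl : s = 0 := by omega
    obtain rfl | hq := Nat.eq_zero_or_pos q
    · exact oscWeight_pathStep_row (by omega)
    · exact oscWeight_pathStep_twoRow hq h₁ hn
  · exact oscWeight_pathStep_hook (by omega) hn
  · obtain ⟨rfl, rfl⟩ : q = 1 ∧ r = 1 := by omega
    exact oscWeight_pathStep_column

theorem card_oscPaths {ℓ m : ℕ} (hℓ : 4 ≤ ℓ) {t : Rows4} (ht : Sorted4 t) :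
    Nat.card (ShapePathsTo AdjBox (fun _ => GammaSet ℓ) m (ofRows4 t)) =
      oscWeight (pathWalks (ℓ - 2) m) t :=
  card_shapePathsTo_ofRows4 AdjRows4 (fun _ => GammaRows (ℓ - 2)) (fun _ _ => id)
    (fun _ _ => adjBox_ofRows4_iff) (fun _ _ => mem_gammaSet_iff hℓ)
    (fun m => oscWeight (pathWalks (ℓ - 2) m)) (fun _ => oscWeight_zero)
    (fun _ _ => oscWeight_eq_zero fun _ => pathWalks_of_lt) (fun _ _ => oscWeight_pathStep) m ht

end Oscillating

theorem rowsEq_iff_eq {μ ν : YoungDiagram} {L : List ℕ} (hν : RowsEq ν L) :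
    RowsEq μ L ↔ μ = ν :=
  ⟨fun hμ => ext_of_rowLen fun i => (hμ i).trans (hν i).symm, fun h => h ▸ hν⟩

theorem oscCount_eq_card {Γ : Set YoungDiagram} {m : ℕ} {L : List ℕ} {ν : YoungDiagram}
    (hν : RowsEq ν L) : oscCount Γ m L = Nat.card (ShapePathsTo AdjBox (fun _ => Γ) m ν) :=
  Nat.card_congr <| Equiv.subtypeEquivRight fun _ => and_congr_right' (rowsEq_iff_eq hν)

theorem tabCount_eq_card {P : ℕ → Set YoungDiagram} {m : ℕ} {L : List ℕ} {ν : YoungDiagram}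
    (hν : RowsEq ν L) : tabCount P m L = Nat.card (ShapePathsTo AddBox P m ν) :=
  Nat.card_congr <| Equiv.subtypeEquivRight fun _ => and_congr_right' (rowsEq_iff_eq hν)

theorem osc_count_eq_choose_succ_general (ℓ m : ℕ) (hℓ : 6 ≤ ℓ)
    (l₁ l₂ : ℕ)
    (hl : l₂ ≤ l₁) (hlm : l₁ + l₂ = m) :
    oscCount (GammaSet ℓ) m [2 * l₁ - m]
      = Nat.choose (tabCount (fun j => LambdaSet j ℓ) m [l₁, l₂] + 1) 2 := by
  have hrow : Sorted4 (l₁ - l₂, 0, 0, 0) := by simp [Sorted4]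
  have hpair : Sorted4 (l₁, l₂, 0, 0) := by simp [Sorted4, hl]
  rw [oscCount_eq_card (ν := ofRows4 (l₁ - l₂, 0, 0, 0)), card_oscPaths (by omega) hrow,
    tabCount_eq_card (ν := ofRows4 (l₁, l₂, 0, 0)), card_tabPaths hpair]
  · simp [oscWeight, tabWeight, hlm]
  · intro i
    rcases i with _ | _ | _ | _ | i <;> simp [rowLen_ofRows4 hpair]
  · intro i
    rcases i with _ | _ | _ | _ | i <;> simp [rowLen_ofRows4 hrow]
    omega

/-- Theorem 2.1, equation (3) (`symdim`), for finite `ℓ`: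
for `λ = [λ₁,λ₂] ∈ Λ(m,ℓ)` and `ν₁ = 2λ₁ - m`,
`|𝒪_ℓ(m,[ν₁])| = C(|𝒯_ℓ(λ)| + 1, 2)`. -/
theorem osc_count_eq_choose_succ (ℓ m : ℕ) (hℓ : 6 ≤ ℓ) (hm : 1 ≤ m)
    (l₁ l₂ : ℕ)
    (hl : l₂ ≤ l₁) (hlm : l₁ + l₂ = m) (hld : l₁ - l₂ ≤ ℓ - 2) :
    oscCount (GammaSet ℓ) m [2 * l₁ - m]
      = Nat.choose (tabCount (fun j => LambdaSet j ℓ) m [l₁, l₂] + 1) 2 :=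
  osc_count_eq_choose_succ_general ℓ m hℓ l₁ l₂ hl hlm
end

section
/- For integers m ≥ 1 and 0 ≤ p ≤ m/2, the number of standard Young tableaux of the two-row shape [m−p, p] equals C(m,p) − C(m,p−1), where C(m,−1) = 0 by convention. -/
/-!
A two-row diagram `[a, b]` is reached from `[a - 1, b]` (if `b < a`) or from `[a, b - 1]`
(if `0 < b`), so the number of standard tableaux satisfies Pascal's recurrence away from the
diagonal `a = b`. The numbers `C(m, p) - C(m, p - 1)` satisfy the same recurrence, and on the
diagonal `C(2q + 1, q + 1) - C(2q + 1, q) = 0` accounts for the missing predecessor.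
-/

open Finset

abbrev TabPath (m : ℕ) (ν : YoungDiagram) : Type :=
  {f : Fin (m + 1) → YoungDiagram // IsTabPath (fun _ => Set.univ) m f ∧ f (Fin.last m) = ν}

section Paths

variable {P : ℕ → Set YoungDiagram} {m : ℕ} {f : Fin (m + 1) → YoungDiagram}

theorem IsTabPath.monotone (hf : IsTabPath P m f) : Monotone f :=
  Fin.monotone_iff_le_succ.mpr fun j => (hf.2.1 j).1

theorem IsTabPath.init {f : Fin (m + 2) → YoungDiagram} (hf : IsTabPath P (m + 1) f) :
    IsTabPath P m (Fin.init f) :=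
  ⟨hf.1, fun j => by simpa only [Fin.init, Fin.succ_castSucc] using hf.2.1 j.castSucc,
    fun j => hf.2.2 j.castSucc⟩

theorem IsTabPath.snoc {ν : YoungDiagram} (hf : IsTabPath P m f) (hν : AddBox (f (Fin.last m)) ν)
    (hνP : ν ∈ P (m + 1)) : IsTabPath P (m + 1) (Fin.snoc f ν) := by
  refine ⟨(Fin.snoc_castSucc (α := fun _ => YoungDiagram) _ _ 0).trans hf.1, fun j => ?_,
    fun j => ?_⟩
  · induction j using Fin.lastCases with
    | last => simpa using hν
    | cast i => rw [Fin.succ_castSucc, Fin.snoc_castSucc, Fin.snoc_castSucc]; exact hf.2.1 i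
  · induction j using Fin.lastCases with
    | last => simpa using hνP
    | cast i => simpa using hf.2.2 i

end Paths

instance (ν : YoungDiagram) : Finite {μ : YoungDiagram // μ ≤ ν} :=
  Finite.of_injective (fun μ => (⟨μ.1.cells, Finset.mem_powerset.2 μ.2⟩ : ν.cells.powerset))
    fun _ _ h => Subtype.ext (YoungDiagram.ext (congrArg Subtype.val h))

instance (m : ℕ) (ν : YoungDiagram) : Finite (TabPath m ν) :=
  Finite.of_injective
    (fun f j => (⟨f.1 j, (f.2.1.monotone (Fin.le_last j)).trans_eq f.2.2⟩ : {μ // μ ≤ ν}))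
    fun _ _ h => Subtype.ext (funext fun j => congrArg Subtype.val (congrFun h j))

theorem card_tabPath_zero : Nat.card (TabPath 0 ⊥) = 1 := by
  refine Nat.card_eq_one_iff_exists.2 ⟨⟨fun _ => ⊥, ⟨rfl, finZeroElim, fun _ => trivial⟩, rfl⟩,
    fun f => Subtype.ext (funext fun j => ?_)⟩
  rw [Subsingleton.elim (α := Fin 1) j 0, f.2.1.1]

def tabPathFiberEquiv {m : ℕ} {μ ν : YoungDiagram} (hμ : AddBox μ ν) :
    {f : TabPath (m + 1) ν // f.1 (Fin.last m).castSucc = μ} ≃ TabPath m μ where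
  toFun f := ⟨Fin.init f.1.1, f.1.2.1.init, f.2⟩
  invFun g :=
    ⟨⟨Fin.snoc g.1 ν, g.2.1.snoc (by rwa [g.2.2]) trivial, Fin.snoc_last _ _⟩, by simp [g.2.2]⟩
  left_inv f := by
    ext1; ext1
    conv_rhs => rw [← Fin.snoc_init_self f.1.1, f.1.2.2]
  right_inv g := Subtype.ext (Fin.init_snoc (α := fun _ => YoungDiagram) _ _)

theorem card_tabPath_succ (m : ℕ) {ν : YoungDiagram} (s : Finset YoungDiagram)
    (hs : ∀ μ, AddBox μ ν ↔ μ ∈ s) :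
    Nat.card (TabPath (m + 1) ν) = ∑ μ ∈ s, Nat.card (TabPath m μ) := by
  have hpenult (f : TabPath (m + 1) ν) : AddBox (f.1 (Fin.last m).castSucc) ν := by
    simpa only [Fin.succ_last, f.2.2] using f.2.1.2.1 (Fin.last m)
  let penult (f : TabPath (m + 1) ν) : s := ⟨f.1 (Fin.last m).castSucc, (hs _).1 (hpenult f)⟩
  calc Nat.card (TabPath (m + 1) ν)
      = Nat.card (Σ μ : s, {f // penult f = μ}) :=
        Nat.card_congr (Equiv.sigmaFiberEquiv penult).symm
    _ = ∑ μ : s, Nat.card {f // penult f = μ} := Nat.card_sigma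
    _ = ∑ μ : s, Nat.card (TabPath m μ) := Finset.sum_congr rfl fun μ _ => Nat.card_congr <|
          (Equiv.subtypeEquivRight fun _ => Subtype.ext_iff).trans
            (tabPathFiberEquiv ((hs μ).2 μ.2))
    _ = ∑ μ ∈ s, Nat.card (TabPath m μ) := Finset.sum_coe_sort s fun μ => Nat.card (TabPath m μ)

theorem YoungDiagram.rowLen_mono {μ ν : YoungDiagram} (h : μ ≤ ν) (i : ℕ) :
    μ.rowLen i ≤ ν.rowLen i :=
  le_of_forall_lt fun _ hj =>
    YoungDiagram.mem_iff_lt_rowLen.1 (h (YoungDiagram.mem_iff_lt_rowLen.2 hj))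

theorem RowsEq.eq {μ ν : YoungDiagram} {L : List ℕ} (hμ : RowsEq μ L) (hν : RowsEq ν L) :
    μ = ν := by
  ext ⟨i, j⟩
  rw [YoungDiagram.mem_cells, YoungDiagram.mem_cells, YoungDiagram.mem_iff_lt_rowLen,
    YoungDiagram.mem_iff_lt_rowLen, hμ, hν]

theorem rowsEq_pair_iff {μ : YoungDiagram} {a b : ℕ} :
    RowsEq μ [a, b] ↔ μ.rowLen 0 = a ∧ μ.rowLen 1 = b ∧ μ.rowLen 2 = 0 := by
  refine ⟨fun h => ⟨h 0, h 1, h 2⟩, fun ⟨h0, h1, h2⟩ i => ?_⟩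
  match i with
  | 0 => exact h0
  | 1 => exact h1
  | n + 2 => simpa [h2] using μ.rowLen_anti 2 (n + 2) (by omega)

section TwoRow

def twoRow (a b : ℕ) (h : b ≤ a) : YoungDiagram where
  cells := {0} ×ˢ range a ∪ {1} ×ˢ range b
  isLowerSet := by
    rintro ⟨i, j⟩ ⟨i', j'⟩ ⟨hi, hj⟩ hmem
    simp only [Finset.coe_union, Finset.coe_product, Finset.coe_singleton, Finset.coe_range,
      Set.mem_union, Set.mem_prod, Set.mem_singleton_iff, Set.mem_Iio] at hmem ⊢
    dsimp only at hi hj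
    omega

variable {a b : ℕ}

theorem mem_twoRow {h : b ≤ a} {c : ℕ × ℕ} :
    c ∈ twoRow a b h ↔ (c.1 = 0 ∧ c.2 < a) ∨ (c.1 = 1 ∧ c.2 < b) := by
  simp only [twoRow, ← YoungDiagram.mem_cells, mem_union, mem_product, mem_singleton, mem_range]

theorem card_twoRow (h : b ≤ a) : (twoRow a b h).card = a + b := by
  rw [YoungDiagram.card, twoRow, card_union_of_disjoint (by simp [disjoint_left])]
  simp

theorem rowsEq_twoRow (h : b ≤ a) : RowsEq (twoRow a b h) [a, b] := fun i =>
  eq_of_forall_lt_iff fun j => by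
    rw [← YoungDiagram.mem_iff_lt_rowLen, mem_twoRow]
    match i with
    | 0 => simp
    | 1 => simp
    | n + 2 => simp

theorem eq_twoRow_iff (h : b ≤ a) {μ : YoungDiagram} : μ = twoRow a b h ↔ RowsEq μ [a, b] :=
  ⟨fun hμ => hμ ▸ rowsEq_twoRow h, fun hμ => hμ.eq (rowsEq_twoRow h)⟩

theorem twoRow_inj {a' b' : ℕ} {h : b ≤ a} {h' : b' ≤ a'} :
    twoRow a b h = twoRow a' b' h' ↔ a = a' ∧ b = b' := by
  simp [eq_twoRow_iff, rowsEq_pair_iff, rowsEq_twoRow h _]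

theorem twoRow_zero_zero : twoRow 0 0 le_rfl = ⊥ := by
  ext c
  simp [mem_twoRow]

theorem twoRow_mono {a' b' : ℕ} (h : b ≤ a) (h' : b' ≤ a') (ha : a' ≤ a) (hb : b' ≤ b) :
    twoRow a' b' h' ≤ twoRow a b h := fun c hc => by
  rw [mem_twoRow] at hc ⊢
  omega

theorem addBox_twoRow_iff (h : b ≤ a) {μ : YoungDiagram} :
    AddBox μ (twoRow a b h) ↔
      (∃ hab : b < a, μ = twoRow (a - 1) b (Nat.le_sub_one_of_lt hab)) ∨
        0 < b ∧ μ = twoRow a (b - 1) ((b.sub_le 1).trans h) := by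
  constructor
  · rintro ⟨hle, hcard⟩
    simp only [eq_twoRow_iff, rowsEq_pair_iff, exists_prop]
    have hrows := rowsEq_pair_iff.1 (rowsEq_twoRow h)
    have h0 := YoungDiagram.rowLen_mono hle 0
    have h1 := YoungDiagram.rowLen_mono hle 1
    have h2 := YoungDiagram.rowLen_mono hle 2
    have h10 := μ.rowLen_anti 0 1 zero_le_one
    have hμ : μ = twoRow _ _ h10 := (eq_twoRow_iff h10).2 (rowsEq_pair_iff.2 ⟨rfl, rfl, by omega⟩)
    rw [hμ, card_twoRow, card_twoRow] at hcard
    omega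
  · rintro (⟨hab, rfl⟩ | ⟨hb, rfl⟩) <;>
    · exact ⟨twoRow_mono _ _ (by omega) (by omega), by rw [card_twoRow, card_twoRow]; omega⟩

theorem card_tabPath_succ_twoRow (m : ℕ) (h : b ≤ a) :
    Nat.card (TabPath (m + 1) (twoRow a b h)) =
      (if hab : b < a then Nat.card (TabPath m (twoRow (a - 1) b (Nat.le_sub_one_of_lt hab)))
        else 0) +
      (if 0 < b then Nat.card (TabPath m (twoRow a (b - 1) ((b.sub_le 1).trans h))) else 0) := by
  classical
  rw [card_tabPath_succ m
    ((if hab : b < a then {twoRow (a - 1) b (Nat.le_sub_one_of_lt hab)} else ∅) ∪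
      (if 0 < b then {twoRow a (b - 1) ((b.sub_le 1).trans h)} else ∅)) ?_,
    sum_union ?_]
  · split_ifs <;> simp
  · split_ifs <;> simp [twoRow_inj]; omega
  · intro μ
    rw [addBox_twoRow_iff]
    split_ifs <;> simp [*]

theorem choose_pred_add_choose (m q : ℕ) :
    (if q = 0 then 0 else m.choose (q - 1)) + m.choose q = (m + 1).choose q := by
  cases q <;> simp [Nat.choose_succ_succ']

-- Stated additively, so that no truncated subtraction enters the induction.
theorem card_tabPath_twoRow_add_choose (m : ℕ) : ∀ a b (h : b ≤ a), a + b = m →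
    Nat.card (TabPath m (twoRow a b h)) + (if b = 0 then 0 else m.choose (b - 1)) =
      m.choose b := by
  induction m with
  | zero =>
    intro a b h hab
    obtain ⟨rfl, rfl⟩ : a = 0 ∧ b = 0 := by omega
    simp [twoRow_zero_zero, card_tabPath_zero]
  | succ m ih =>
    intro a b h hab
    rw [card_tabPath_succ_twoRow]
    obtain _ | q := b
    · simpa [show 0 < a by omega] using ih (a - 1) 0 (Nat.zero_le _) (by omega)
    · have hpascal := Nat.choose_succ_succ' m q
      have hpred := choose_pred_add_choose m q
      have ihq := ih a q (by omega) (by omega)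
      simp only [Nat.add_one_sub_one, Nat.succ_pos, Nat.add_one_ne_zero, if_false]
      split_ifs with hab
      · have := ih (a - 1) (q + 1) (Nat.le_sub_one_of_lt hab) (by omega)
        simp only [Nat.add_one_ne_zero, if_false, Nat.add_one_sub_one] at this
        omega
      · obtain rfl : m = 2 * q + 1 := by omega
        have := Nat.choose_symm_half q
        omega

end TwoRow

theorem std_tab_count_two_row_general (m p : ℕ) (hp : 2 * p ≤ m) :
    tabCount (fun _ => Set.univ) m [m - p, p]
      = m.choose p - (if p = 0 then 0 else m.choose (p - 1)) := by
  have h : p ≤ m - p := by omega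
  have hcount : tabCount (fun _ => Set.univ) m [m - p, p] =
      Nat.card (TabPath m (twoRow (m - p) p h)) :=
    Nat.card_congr <|
      Equiv.subtypeEquivRight fun _ => and_congr_right fun _ => (eq_twoRow_iff h).symm
  have := card_tabPath_twoRow_add_choose m (m - p) p h (by omega)
  omega

/-- Lemma 2.2(a) (Jones): the number of standard Young tableaux of the two-row
shape `[m-p, p]` is `C(m,p) - C(m,p-1)`, with `C(m,-1) = 0` by convention. -/
theorem std_tab_count_two_row (m p : ℕ) (hm : 1 ≤ m) (hp : 2 * p ≤ m) :
    tabCount (fun _ => Set.univ) m [m - p, p]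
      = m.choose p - (if p = 0 then 0 else m.choose (p - 1)) :=
  std_tab_count_two_row_general m p hp
end

section
/- Let ℓ ≥ 6 be an integer, fix m ≥ 3, and let λ, μ ∈ Γ(ℓ) be Young diagrams such that m − |λ| and m − |μ| are nonnegative even integers. If λ ≠ μ, then P(m,λ) ≠ P(m,μ), where P(m,λ) := {ν ∈ Γ(ℓ) : ν ↔ λ and (m−1) − |ν| is a nonnegative even integer}. -/
/-- The set `P(m,λ)` of level-`m-1` predecessors of `λ` in `Γ(ℓ)`. -/
def PredSet (ℓ m : ℕ) (l : YoungDiagram) : Set YoungDiagram :=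
  {ν | ν ∈ GammaSet ℓ ∧ AdjBox ν l ∧ ν.card ≤ m - 1 ∧ Even (m - 1 - ν.card)}

namespace YoungDiagram

theorem eq_of_le_of_card_le {ν μ : YoungDiagram} (h : ν ≤ μ) (hcard : μ.card ≤ ν.card) :
    ν = μ :=
  YoungDiagram.ext (Finset.eq_of_subset_of_card_le (cells_subset_iff.mpr h) hcard)

theorem eq_of_rowsEq {ν μ : YoungDiagram} {L : List ℕ} (hν : RowsEq ν L) (hμ : RowsEq μ L) :
    ν = μ := by
  ext ⟨i, j⟩
  simp only [mem_cells, mem_iff_lt_rowLen, hν i, hμ i]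

theorem rowLen_mono_s9 (i : ℕ) : Monotone fun μ : YoungDiagram => μ.rowLen i := by
  intro ν μ h
  by_contra! hlt
  exact (mem_iff_lt_rowLen.mp (h (mem_iff_lt_rowLen.mpr hlt))).false

theorem colLen_mono (j : ℕ) : Monotone fun μ : YoungDiagram => μ.colLen j := by
  intro ν μ h
  by_contra! hlt
  exact (mem_iff_lt_colLen.mp (h (mem_iff_lt_colLen.mpr hlt))).false

theorem lt_rowLen_iff_lt_colLen {μ : YoungDiagram} {i j : ℕ} :
    j < μ.rowLen i ↔ i < μ.colLen j :=
  mem_iff_lt_rowLen.symm.trans mem_iff_lt_colLen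

theorem disjoint_row (μ : YoungDiagram) {i i' : ℕ} (h : i ≠ i') :
    Disjoint (μ.row i) (μ.row i') :=
  Finset.disjoint_left.mpr fun _ hc hc' =>
    h ((mem_row_iff.mp hc).2.symm.trans (mem_row_iff.mp hc').2)

theorem disjoint_col (μ : YoungDiagram) {j j' : ℕ} (h : j ≠ j') :
    Disjoint (μ.col j) (μ.col j') :=
  Finset.disjoint_left.mpr fun _ hc hc' =>
    h ((mem_col_iff.mp hc).2.symm.trans (mem_col_iff.mp hc').2)

theorem rowLen_add_rowLen_le_card (μ : YoungDiagram) {i i' : ℕ} (h : i ≠ i') :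
    μ.rowLen i + μ.rowLen i' ≤ μ.card := by
  rw [rowLen_eq_card, rowLen_eq_card, ← Finset.card_union_of_disjoint (μ.disjoint_row h)]
  exact Finset.card_le_card (Finset.union_subset (fun _ hc => (mem_row_iff.mp hc).1)
    fun _ hc => (mem_row_iff.mp hc).1)

theorem colLen_add_colLen_le_card (μ : YoungDiagram) {j j' : ℕ} (h : j ≠ j') :
    μ.colLen j + μ.colLen j' ≤ μ.card := by
  rw [colLen_eq_card, colLen_eq_card, ← Finset.card_union_of_disjoint (μ.disjoint_col h)]
  exact Finset.card_le_card (Finset.union_subset (fun _ hc => (mem_col_iff.mp hc).1)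
    fun _ hc => (mem_col_iff.mp hc).1)

theorem card_eq_sum_rowLen {μ : YoungDiagram} {k : ℕ} (hk : μ.rowLen k = 0) :
    μ.card = ∑ i ∈ Finset.range k, μ.rowLen i := by
  have hcells : μ.cells = (Finset.range k).biUnion μ.row := by
    ext ⟨i, j⟩
    simp only [Finset.mem_biUnion, Finset.mem_range, mem_row_iff, mem_cells]
    refine ⟨fun h => ⟨i, ?_, h, rfl⟩, fun ⟨_, _, h, _⟩ => h⟩
    by_contra! hki
    have := μ.rowLen_anti k i hki
    rw [mem_iff_lt_rowLen] at h
    omega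
  rw [YoungDiagram.card, hcells, Finset.card_biUnion]
  · simp only [rowLen_eq_card]
  · exact fun _ _ _ _ h => μ.disjoint_row h

/-- Corners of a Young diagram are its maximal cells. -/
def erase (μ : YoungDiagram) (c : ℕ × ℕ) (hc : Maximal (· ∈ μ) c) : YoungDiagram where
  cells := μ.cells.erase c
  isLowerSet x y hyx hx := by
    rw [Finset.mem_coe, Finset.mem_erase] at hx ⊢
    exact ⟨fun hyc => hx.1 (hc.eq_of_ge hx.2 (hyc ▸ hyx)), μ.isLowerSet hyx hx.2⟩

section erase

variable {μ : YoungDiagram} {c : ℕ × ℕ} (hc : Maximal (· ∈ μ) c)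

theorem mem_erase {x : ℕ × ℕ} : x ∈ μ.erase c hc ↔ x ≠ c ∧ x ∈ μ :=
  Finset.mem_erase

theorem erase_le : μ.erase c hc ≤ μ := fun _ hx => ((mem_erase hc).mp hx).2

theorem card_erase_add_one : (μ.erase c hc).card + 1 = μ.card :=
  Finset.card_erase_add_one hc.1

end erase

theorem exists_maximal_notMem_of_not_le {ν μ : YoungDiagram} (h : ¬ν ≤ μ) :
    ∃ c, Maximal (· ∈ ν) c ∧ c ∉ μ := by
  obtain ⟨x, hxν, hxμ⟩ := Set.not_subset.mp h
  obtain ⟨c, hxc, hc⟩ := ν.cells.exists_le_maximal hxν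
  exact ⟨c, hc, fun hcμ => hxμ (μ.isLowerSet hxc hcμ)⟩

theorem exists_maximal_of_card_pos {μ : YoungDiagram} (h : 0 < μ.card) :
    ∃ c, Maximal (· ∈ μ) c :=
  μ.cells.exists_maximal (Finset.card_pos.mp h)

def addToRowZero (μ : YoungDiagram) : YoungDiagram where
  cells := insert (0, μ.rowLen 0) μ.cells
  isLowerSet := by
    rintro ⟨i, j⟩ ⟨i', j'⟩ hle hx
    rw [Finset.coe_insert, Set.mem_insert_iff, Finset.mem_coe] at hx ⊢
    rcases hx with hx | hx
    · obtain ⟨rfl, rfl⟩ := Prod.mk.inj hx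
      obtain ⟨hi, hj⟩ := Prod.mk_le_mk.mp hle
      obtain rfl := Nat.le_zero.mp hi
      rcases hj.lt_or_eq with hj | rfl
      · exact Or.inr (mem_iff_lt_rowLen.mpr hj)
      · exact Or.inl rfl
    · exact Or.inr (μ.isLowerSet hle hx)

theorem mem_addToRowZero {μ : YoungDiagram} {x : ℕ × ℕ} :
    x ∈ μ.addToRowZero ↔ x = (0, μ.rowLen 0) ∨ x ∈ μ :=
  Finset.mem_insert

theorem addBox_addToRowZero (μ : YoungDiagram) : AddBox μ μ.addToRowZero :=
  ⟨fun _ hx => mem_addToRowZero.mpr (Or.inr hx),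
    Finset.card_insert_of_notMem fun h => (mem_iff_lt_rowLen.mp h).false⟩

theorem cells_eq_Iic {μ : YoungDiagram} {c : ℕ × ℕ} (hc : c ∈ μ)
    (h : ∀ x ∈ μ, x ≤ c) : μ.cells = Finset.Iic c := by
  ext x
  rw [Finset.mem_Iic]
  exact ⟨h x, fun hx => μ.isLowerSet hx hc⟩

section corners

variable {ν μ : YoungDiagram}

/-- `c` is the only corner of `ν`: deleting any other one would leave `c` outside `μ`. -/
theorem le_of_forall_erase_le (hν : ∀ c hc, ν.erase c hc ≤ μ) {c : ℕ × ℕ}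
    (hc : Maximal (· ∈ ν) c) (hcμ : c ∉ μ) : ∀ x ∈ ν, x ≤ c := by
  intro x hx
  obtain ⟨c', hxc', hc'⟩ := ν.cells.exists_le_maximal hx
  obtain rfl : c' = c := by
    by_contra hne
    exact hcμ (hν c' hc' ((mem_erase hc').mpr ⟨Ne.symm hne, hc.1⟩))
  exact hxc'

theorem cells_eq_Iic_of_forall_erase_le (hne : ν ≠ μ) (hcard : ν.card = μ.card)
    (hν : ∀ c hc, ν.erase c hc ≤ μ) (hμ : ∀ d hd, μ.erase d hd ≤ ν) :
    ν.cells = Finset.Iic (0, 1) ∧ μ.cells = Finset.Iic (1, 0) ∨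
      ν.cells = Finset.Iic (1, 0) ∧ μ.cells = Finset.Iic (0, 1) := by
  obtain ⟨⟨i, j⟩, hc, hcμ⟩ :=
    exists_maximal_notMem_of_not_le fun h => hne (eq_of_le_of_card_le h hcard.ge)
  obtain ⟨⟨i', j'⟩, hd, hdν⟩ :=
    exists_maximal_notMem_of_not_le fun h => hne (eq_of_le_of_card_le h hcard.le).symm
  have hνc := le_of_forall_erase_le hν hc hcμ
  have hμd := le_of_forall_erase_le hμ hd hdν
  have hνd : ∀ x ≤ (i, j), x ≠ (i, j) → x ≤ (i', j') := fun x hx hxc =>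
    hμd x (hν _ hc ((mem_erase hc).mpr ⟨hxc, ν.isLowerSet hx hc.1⟩))
  have hμc : ∀ x ≤ (i', j'), x ≠ (i', j') → x ≤ (i, j) := fun x hx hxd =>
    hνc x (hμ _ hd ((mem_erase hd).mpr ⟨hxd, μ.isLowerSet hx hd.1⟩))
  have hcd : ¬(i ≤ i' ∧ j ≤ j') := fun h => hcμ (μ.isLowerSet (Prod.mk_le_mk.mpr h) hd.1)
  have hdc : ¬(i' ≤ i ∧ j' ≤ j) := fun h => hdν (ν.isLowerSet (Prod.mk_le_mk.mpr h) hc.1)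
  -- the cells next to each corner lie in the other diagram, hence below its corner
  have h₁ := hνd (i, j - 1)
  have h₂ := hνd (i - 1, j)
  have h₃ := hμc (i', j' - 1)
  have h₄ := hμc (i' - 1, j')
  simp only [Prod.mk_le_mk, ne_eq, Prod.mk.injEq, le_refl, true_and, and_true]
    at h₁ h₂ h₃ h₄
  obtain ⟨rfl, rfl, rfl, rfl⟩ | ⟨rfl, rfl, rfl, rfl⟩ :
      (i = 0 ∧ j = 1 ∧ i' = 1 ∧ j' = 0) ∨ (i = 1 ∧ j = 0 ∧ i' = 0 ∧ j' = 1) := by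
    omega
  · exact Or.inl ⟨cells_eq_Iic hc.1 hνc, cells_eq_Iic hd.1 hμd⟩
  · exact Or.inr ⟨cells_eq_Iic hc.1 hνc, cells_eq_Iic hd.1 hμd⟩

end corners

end YoungDiagram

open YoungDiagram

/-- `Γ(ℓ)` without its exceptional diagram `[ℓ-2,1,1]`. -/
def GammaCore (ℓ : ℕ) : Set YoungDiagram :=
  {μ | μ.colLen 0 + μ.colLen 1 ≤ 4 ∧ μ.rowLen 0 + μ.rowLen 1 ≤ ℓ - 2}

section Gamma

variable {ℓ : ℕ} {ν μ : YoungDiagram}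

theorem isLowerSet_gammaCore : IsLowerSet (GammaCore ℓ) := by
  rintro μ ν hνμ ⟨hcol, hrow⟩
  have : ν.colLen 0 ≤ μ.colLen 0 := colLen_mono 0 hνμ
  have : ν.colLen 1 ≤ μ.colLen 1 := colLen_mono 1 hνμ
  have : ν.rowLen 0 ≤ μ.rowLen 0 := rowLen_mono_s9 0 hνμ
  have : ν.rowLen 1 ≤ μ.rowLen 1 := rowLen_mono_s9 1 hνμ
  exact ⟨by omega, by omega⟩

theorem mem_gammaCore_of_card_le (h4 : μ.card ≤ 4) (hℓ : μ.card + 2 ≤ ℓ) :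
    μ ∈ GammaCore ℓ := by
  have := μ.colLen_add_colLen_le_card zero_ne_one
  have := μ.rowLen_add_rowLen_le_card zero_ne_one
  exact ⟨by omega, by omega⟩

/-- Below the first two rows only the first column can be occupied, and a cell in row `3`
forces `μ ⊆ [1,1,1,1]`. -/
theorem card_lt_of_mem_gammaCore (hℓ : 5 ≤ ℓ) (h : μ ∈ GammaCore ℓ) : μ.card < ℓ := by
  obtain ⟨hcol, hrow⟩ := h
  have h4 : μ.rowLen 4 = 0 := by
    by_contra h4
    have := lt_rowLen_iff_lt_colLen.mp (Nat.pos_of_ne_zero h4)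
    omega
  have e₁ : 1 < μ.rowLen 2 → 2 < μ.colLen 1 := lt_rowLen_iff_lt_colLen.mp
  have e₂ : 0 < μ.rowLen 2 → 2 < μ.colLen 0 := lt_rowLen_iff_lt_colLen.mp
  have e₃ : 0 < μ.rowLen 3 → 3 < μ.colLen 0 := lt_rowLen_iff_lt_colLen.mp
  have e₄ : 1 < μ.rowLen 0 → 0 < μ.colLen 1 := lt_rowLen_iff_lt_colLen.mp
  have e₅ : 1 < μ.rowLen 1 → 1 < μ.colLen 1 := lt_rowLen_iff_lt_colLen.mp
  have := μ.rowLen_anti 2 3 (by omega)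
  rw [card_eq_sum_rowLen h4]
  simp only [Finset.sum_range_succ, Finset.sum_range_zero, zero_add]
  omega

theorem card_of_rowsEq_hook (hℓ : 2 ≤ ℓ) (h : RowsEq μ [ℓ - 2, 1, 1]) : μ.card = ℓ := by
  rw [card_eq_sum_rowLen (h 3)]
  simp only [Finset.sum_range_succ, Finset.sum_range_zero, h 0, h 1, h 2]
  simp only [List.getD_cons_zero, List.getD_cons_succ]
  omega

theorem card_le_of_mem_gammaSet (hℓ : 5 ≤ ℓ) (h : μ ∈ GammaSet ℓ) : μ.card ≤ ℓ := by
  rcases h with h | h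
  · exact (card_lt_of_mem_gammaCore hℓ h).le
  · exact (card_of_rowsEq_hook (by omega) h).le

theorem mem_gammaCore_of_card_lt (hℓ : 2 ≤ ℓ) (h : μ ∈ GammaSet ℓ)
    (hlt : μ.card < ℓ) : μ ∈ GammaCore ℓ := by
  rcases h with h | h
  · exact h
  · exact absurd (card_of_rowsEq_hook hℓ h) hlt.ne

theorem eq_of_mem_gammaSet_of_card_eq (hℓ : 5 ≤ ℓ) (hν : ν ∈ GammaSet ℓ)
    (hμ : μ ∈ GammaSet ℓ) (hνℓ : ν.card = ℓ) (hμℓ : μ.card = ℓ) : ν = μ := by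
  rcases hν with hν | hν
  · exact absurd hνℓ (card_lt_of_mem_gammaCore hℓ hν).ne
  rcases hμ with hμ | hμ
  · exact absurd hμℓ (card_lt_of_mem_gammaCore hℓ hμ).ne
  exact eq_of_rowsEq hν hμ

end Gamma

section Pred

variable {ℓ m : ℕ} {l u ν : YoungDiagram}

theorem AdjBox.symm (h : AdjBox ν u) : AdjBox u ν := Or.symm h

theorem AdjBox.card_eq_or (h : AdjBox ν u) : u.card = ν.card + 1 ∨ ν.card = u.card + 1 :=
  h.imp And.right And.right

theorem AdjBox.le_of_card_lt (h : AdjBox ν u) (hlt : ν.card < u.card) : ν ≤ u := by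
  rcases h with h | h
  · exact h.1
  · have := h.2
    omega

theorem addToRowZero_mem_gammaSet (hℓ : 5 ≤ ℓ) (h : l.card ≤ 2) :
    l.addToRowZero ∈ GammaSet ℓ := by
  have := (addBox_addToRowZero l).2
  exact Or.inl (mem_gammaCore_of_card_le (by omega) (by omega))

theorem mem_predSet_of_addBox_left (hν : ν ∈ GammaSet ℓ) (h : AddBox ν l)
    (hlm : l.card ≤ m) (hle : Even (m - l.card)) : ν ∈ PredSet ℓ m l := by
  obtain ⟨k, hk⟩ := hle
  have := h.2
  exact ⟨hν, Or.inl h, by omega, ⟨k, by omega⟩⟩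

theorem mem_predSet_of_addBox_right (hν : ν ∈ GammaSet ℓ) (h : AddBox l ν)
    (hlm : l.card < m) (hle : Even (m - l.card)) : ν ∈ PredSet ℓ m l := by
  obtain ⟨k, hk⟩ := hle
  have := h.2
  exact ⟨hν, Or.inr h, by omega, ⟨k - 1, by omega⟩⟩

theorem erase_mem_predSet (hl : l ∈ GammaCore ℓ) (hlm : l.card ≤ m) (hle : Even (m - l.card))
    {c : ℕ × ℕ} (hc : Maximal (· ∈ l) c) : l.erase c hc ∈ PredSet ℓ m l :=
  mem_predSet_of_addBox_left (Or.inl (isLowerSet_gammaCore (erase_le hc) hl))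
    ⟨erase_le hc, (card_erase_add_one hc).symm⟩ hlm hle

theorem predSet_ne_of_card_lt (hℓ : 5 ≤ ℓ) (hm : 3 ≤ m) (hl : l ∈ GammaSet ℓ)
    (hu : u ∈ GammaSet ℓ) (hlm : l.card ≤ m) (hle : Even (m - l.card))
    (hum : u.card ≤ m) (hue : Even (m - u.card)) (hlt : l.card < u.card) :
    PredSet ℓ m l ≠ PredSet ℓ m u := by
  intro heq
  have hgap : l.card + 2 ≤ u.card := by
    obtain ⟨a, ha⟩ := hle
    obtain ⟨b, hb⟩ := hue
    omega
  have huℓ := card_le_of_mem_gammaSet hℓ hu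
  rcases Nat.eq_zero_or_pos l.card with hl0 | hpos
  · -- the single box lies in `P(m,l)`, so `|u| = 2`; then a box added to `u` separates
    have hbox : l.addToRowZero ∈ PredSet ℓ m u := heq ▸
      mem_predSet_of_addBox_right (addToRowZero_mem_gammaSet hℓ (by omega))
        (addBox_addToRowZero l) (by omega) hle
    have hu2 : u.card = 2 := by
      have := hbox.2.1.card_eq_or
      have := (addBox_addToRowZero l).2
      omega
    have hsucc : u.addToRowZero ∈ PredSet ℓ m l := heq ▸
      mem_predSet_of_addBox_right (addToRowZero_mem_gammaSet hℓ (by omega))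
        (addBox_addToRowZero u) (by omega) hue
    have := hsucc.2.1.card_eq_or
    have := (addBox_addToRowZero u).2
    omega
  · obtain ⟨c, hc⟩ := exists_maximal_of_card_pos hpos
    have hpred : l.erase c hc ∈ PredSet ℓ m u :=
      heq ▸ erase_mem_predSet (mem_gammaCore_of_card_lt (by omega) hl (by omega)) hlm hle hc
    have := hpred.2.1.card_eq_or
    have := card_erase_add_one hc
    omega

theorem erase_le_of_predSet_eq (hl : l ∈ GammaCore ℓ) (hlm : l.card ≤ m)
    (hle : Even (m - l.card)) (hcard : l.card = u.card)
    (heq : PredSet ℓ m l = PredSet ℓ m u) (c : ℕ × ℕ) (hc : Maximal (· ∈ l) c) :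
    l.erase c hc ≤ u := by
  have hpred : l.erase c hc ∈ PredSet ℓ m u := heq ▸ erase_mem_predSet hl hlm hle hc
  exact hpred.2.1.le_of_card_lt (by have := card_erase_add_one hc; omega)

theorem predSet_ne_of_cells_eq_Iic (hℓ : 5 ≤ ℓ) (hm : 3 ≤ m)
    (hl : l.cells = Finset.Iic (0, 1)) (hu : u.cells = Finset.Iic (1, 0))
    (hle : Even (m - l.card)) :
    PredSet ℓ m l ≠ PredSet ℓ m u := by
  have hl2 : l.card = 2 := by rw [YoungDiagram.card, hl]; decide
  have hu2 : u.card = 2 := by rw [YoungDiagram.card, hu]; decide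
  intro heq
  have hsucc : l.addToRowZero ∈ PredSet ℓ m u := heq ▸
    mem_predSet_of_addBox_right (addToRowZero_mem_gammaSet hℓ hl2.le)
      (addBox_addToRowZero l) (by obtain ⟨k, hk⟩ := hle; omega) hle
  have hul : u ≤ l.addToRowZero :=
    hsucc.2.1.symm.le_of_card_lt (by rw [(addBox_addToRowZero l).2]; omega)
  have h10 : ((1, 0) : ℕ × ℕ) ∈ l.addToRowZero := hul (by rw [← mem_cells, hu]; decide)
  rcases mem_addToRowZero.mp h10 with h | h
  · exact one_ne_zero (congrArg Prod.fst h)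
  · rw [← mem_cells, hl] at h
    exact absurd h (by decide)

theorem predSet_ne_of_card_eq (hℓ : 5 ≤ ℓ) (hm : 3 ≤ m) (hl : l ∈ GammaSet ℓ)
    (hu : u ∈ GammaSet ℓ) (hlm : l.card ≤ m) (hle : Even (m - l.card))
    (hum : u.card ≤ m) (hue : Even (m - u.card)) (hne : l ≠ u) (hcard : l.card = u.card) :
    PredSet ℓ m l ≠ PredSet ℓ m u := by
  intro heq
  have hlt : l.card < ℓ := (card_le_of_mem_gammaSet hℓ hl).lt_of_ne fun h =>
    hne (eq_of_mem_gammaSet_of_card_eq hℓ hl hu h (hcard ▸ h))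
  have hlc := mem_gammaCore_of_card_lt (by omega) hl hlt
  have huc := mem_gammaCore_of_card_lt (by omega) hu (hcard ▸ hlt)
  rcases cells_eq_Iic_of_forall_erase_le hne hcard (erase_le_of_predSet_eq hlc hlm hle hcard heq)
      (erase_le_of_predSet_eq huc hum hue hcard.symm heq.symm) with ⟨hl', hu'⟩ | ⟨hl', hu'⟩
  · exact predSet_ne_of_cells_eq_Iic hℓ hm hl' hu' hle heq
  · exact predSet_ne_of_cells_eq_Iic hℓ hm hu' hl' hue heq.symm

end Pred

/-- Lemma 2.3: for `m ≥ 3` and `λ ≠ μ` in `Γ(ℓ)` with `m - |λ|` and `m - |μ|`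
nonnegative even integers, the predecessor sets `P(m,λ)` and `P(m,μ)` differ. -/
theorem predecessor_sets_distinguish (ℓ m : ℕ) (hℓ : 6 ≤ ℓ) (hm : 3 ≤ m)
    (l u : YoungDiagram) (hlΓ : l ∈ GammaSet ℓ) (huΓ : u ∈ GammaSet ℓ)
    (hlm : l.card ≤ m) (hle : Even (m - l.card))
    (hum : u.card ≤ m) (hue : Even (m - u.card))
    (hne : l ≠ u) :
    PredSet ℓ m l ≠ PredSet ℓ m u := by
  have hℓ' : 5 ≤ ℓ := by omega
  rcases lt_trichotomy l.card u.card with hlt | hcard | hgt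
  · exact predSet_ne_of_card_lt hℓ' hm hlΓ huΓ hlm hle hum hue hlt
  · exact predSet_ne_of_card_eq hℓ' hm hlΓ huΓ hlm hle hum hue hne hcard
  · exact (predSet_ne_of_card_lt hℓ' hm huΓ hlΓ hum hue hlm hle hgt).symm
end

section
/- Let K be a field, let q ∈ K be nonzero with q² + 1 ≠ 0, and let A be an associative unital K-algebra. Suppose a, b ∈ A satisfy a² = a, b² = b, aba = (q + q⁻¹)⁻² a, and bab = (q + q⁻¹)⁻² b. Set g_a = (1 + q⁻²)a − 1 and g_b = (1 + q⁻²)b − 1. Then g_a g_b g_a = g_b g_a g_b. Moreover, if instead a, b ∈ A are idempotents with ab = ba, then g_a g_b = g_b g_a. -/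
/-! Expanding with `a² = a`, `aba = c a` gives
`g_a g_b g_a = (t³c - t² + 2t) a + t b - t² (ab + ba) - 1` for `g_x = t x - 1`, and symmetrically for
`g_b g_a g_b`; the two agree as soon as `t² c = t - 1`, which for `t = 1 + q⁻²`, `c = (q + q⁻¹)⁻²`
is the identity `(1 + q⁻²)² = q⁻² (q + q⁻¹)²`. -/

section TemperleyLieb

variable {R A : Type*} [CommRing R] [Ring A] [Algebra R A]

theorem smul_sub_one_mul_smul_sub_one_mul_smul_sub_one {a : A} (ha : a * a = a) (b : A) (t : R) :
    (t • a - 1) * (t • b - 1) * (t • a - 1)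
      = t ^ 3 • (a * b * a) - t ^ 2 • (a * b + b * a) + (2 * t - t ^ 2) • a + t • b - 1 := by
  simp only [sub_mul, mul_sub, smul_mul_assoc, mul_smul_comm, mul_one, one_mul, ha]
  module

theorem braid_of_temperleyLieb {t c : R} (htc : t ^ 2 * c = t - 1) {a b : A}
    (ha : a * a = a) (hb : b * b = b) (haba : a * b * a = c • a) (hbab : b * a * b = c • b) :
    (t • a - 1) * (t • b - 1) * (t • a - 1) = (t • b - 1) * (t • a - 1) * (t • b - 1) := by
  rw [smul_sub_one_mul_smul_sub_one_mul_smul_sub_one ha,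
    smul_sub_one_mul_smul_sub_one_mul_smul_sub_one hb, haba, hbab, add_comm (b * a)]
  linear_combination (norm := module) t • htc • (a - b)

theorem Commute.smul_sub_one {a b : A} (h : Commute a b) (s t : R) :
    Commute (s • a - 1) (t • b - 1) :=
  ((h.smul_left s).smul_right t |>.sub_right (Commute.one_right _)).sub_left (Commute.one_left _)

end TemperleyLieb

theorem one_add_inv_sq_sq_mul_inv_add_inv_sq {K : Type*} [Field K] {q : K} (hq : q ≠ 0)
    (hq2 : q ^ 2 + 1 ≠ 0) :
    (1 + q⁻¹ ^ 2) ^ 2 * ((q + q⁻¹) ^ 2)⁻¹ = q⁻¹ ^ 2 := by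
  field_simp

/-- Lemma 3.2(a), relations (B1) and (B2): if `a, b` satisfy the Temperley-Lieb
relations (H) and (T1), then `g_a = (1+q⁻²)a - 1` and `g_b = (1+q⁻²)b - 1`
satisfy the braid relation; and if instead `a, b` are commuting idempotents,
then `g_a` and `g_b` commute. -/
theorem tl_braid_relations (K : Type*) [Field K] (A : Type*) [Ring A] [Algebra K A]
    (q : K) (hq : q ≠ 0) (hq2 : q ^ 2 + 1 ≠ 0) :
    (∀ a b : A, a * a = a → b * b = b →
      a * b * a = ((q + q⁻¹) ^ 2)⁻¹ • a →
      b * a * b = ((q + q⁻¹) ^ 2)⁻¹ • b →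
      ((1 + q⁻¹ ^ 2) • a - 1) * ((1 + q⁻¹ ^ 2) • b - 1) * ((1 + q⁻¹ ^ 2) • a - 1)
        = ((1 + q⁻¹ ^ 2) • b - 1) * ((1 + q⁻¹ ^ 2) • a - 1) * ((1 + q⁻¹ ^ 2) • b - 1)) ∧
    (∀ a b : A, a * a = a → b * b = b → a * b = b * a →
      ((1 + q⁻¹ ^ 2) • a - 1) * ((1 + q⁻¹ ^ 2) • b - 1)
        = ((1 + q⁻¹ ^ 2) • b - 1) * ((1 + q⁻¹ ^ 2) • a - 1)) := by
  have htc : (1 + q⁻¹ ^ 2) ^ 2 * ((q + q⁻¹) ^ 2)⁻¹ = (1 + q⁻¹ ^ 2) - 1 := by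
    rw [one_add_inv_sq_sq_mul_inv_add_inv_sq hq hq2, add_sub_cancel_left]
  exact ⟨fun _ _ ha hb haba hbab ↦ braid_of_temperleyLieb htc ha hb haba hbab,
    fun _ _ _ _ hab ↦ (Commute.smul_sub_one hab _ _).eq⟩
end

section
/- Let K be a field, let q ∈ K be nonzero, and let A be an associative unital K-algebra. Suppose a ∈ A satisfies a² = a, and set g = (1 + q⁻²)a − 1 and G̃ = q·(g ⊗ g) in the tensor product algebra A ⊗_K A. Then (G̃ − q⁻³·1)(G̃ − q·1)(G̃ + q⁻¹·1) = 0; that is, G̃ satisfies the BMW cubic eigenvalue relation (R1) with r = q³. -/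
open scoped TensorProduct

/-- Lemma 5.4(1): for an idempotent `a`, `g = (1+q⁻²)a - 1`, and
`G̃ = q (g ⊗ g)` in `A ⊗[K] A`, the BMW cubic relation (R1) with `r = q³` holds:
`(G̃ - q⁻³)(G̃ - q)(G̃ + q⁻¹) = 0`. -/
theorem bmw_cubic_relation (K : Type*) [Field K] (A : Type*) [Ring A] [Algebra K A]
    (q : K) (hq : q ≠ 0) (a : A) (ha : a * a = a) :
    (q • (((1 + q⁻¹ ^ 2) • a - 1) ⊗ₜ[K] ((1 + q⁻¹ ^ 2) • a - 1)) - q⁻¹ ^ 3 • (1 : A ⊗[K] A))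
      * (q • (((1 + q⁻¹ ^ 2) • a - 1) ⊗ₜ[K] ((1 + q⁻¹ ^ 2) • a - 1)) - q • (1 : A ⊗[K] A))
      * (q • (((1 + q⁻¹ ^ 2) • a - 1) ⊗ₜ[K] ((1 + q⁻¹ ^ 2) • a - 1)) + q⁻¹ • (1 : A ⊗[K] A))
      = 0 := by
  set c : K := q⁻¹ ^ 2 with hc
  set s : A := (1 + c) • a with hsdef
  set g : A := s - 1 with hgdef
  set p : A := (1 + c) • (a - 1) with hpdef
  have huv : (a - 1) * a = 0 := by rw [sub_mul, one_mul, ha, sub_self]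
  have hvu : a * (a - 1) = 0 := by rw [mul_sub, mul_one, ha, sub_self]
  have huu : (a - 1) * (a - 1) = -(a - 1) := by rw [mul_sub, mul_one, huv, zero_sub]
  have hgp : g = p + c • 1 := by rw [hgdef, hpdef, hsdef]; module
  have hps : p * s = 0 := by rw [hpdef, hsdef, smul_mul_smul_comm, huv, smul_zero]
  have hsp : s * p = 0 := by rw [hpdef, hsdef, smul_mul_smul_comm, hvu, smul_zero]
  have hss : s * s = (1 + c) • s := by
    rw [hsdef, smul_mul_smul_comm, ha, smul_smul]
  have hgs2 : g * s = c • s := by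
    rw [hgdef, sub_mul, one_mul, hss]; module
  have hsg : s * g = c • s := by
    rw [hgdef, mul_sub, mul_one, hss]; module
  have hpg : p * g = -p := by
    rw [hgdef, mul_sub, mul_one, hps, zero_sub]
  have hpp : p * p = -((1 + c) • p) := by
    rw [hpdef, smul_mul_smul_comm, huu]; module
  -- tensor factorizations
  have h1 : q • (g ⊗ₜ[K] g) - q⁻¹ ^ 3 • (1 : A ⊗[K] A)
      = q • (p ⊗ₜ[K] g + c • ((1 : A) ⊗ₜ[K] p)) := by
    have hq3 : q⁻¹ ^ 3 = q * (c * c) := by rw [hc]; field_simp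
    rw [hq3, hgp, Algebra.TensorProduct.one_def]
    simp only [TensorProduct.add_tmul, TensorProduct.tmul_add, ← TensorProduct.smul_tmul',
      TensorProduct.tmul_smul]
    module
  have h2 : q • (g ⊗ₜ[K] g) - q • (1 : A ⊗[K] A)
      = q • (s ⊗ₜ[K] g - (1 : A) ⊗ₜ[K] s) := by
    rw [hgdef, Algebra.TensorProduct.one_def]
    simp only [TensorProduct.sub_tmul, TensorProduct.tmul_sub]
    module
  have h3 : q • (g ⊗ₜ[K] g) + q⁻¹ • (1 : A ⊗[K] A)
      = q • (p ⊗ₜ[K] g + c • ((1 : A) ⊗ₜ[K] s)) := by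
    have hq1 : q⁻¹ = q * c := by rw [hc]; field_simp
    rw [hq1, hgp, hpdef, hsdef, Algebra.TensorProduct.one_def]
    simp only [smul_sub, TensorProduct.add_tmul, TensorProduct.tmul_add, TensorProduct.sub_tmul,
      TensorProduct.tmul_sub, ← TensorProduct.smul_tmul', TensorProduct.tmul_smul]
    module
  rw [h1, h2, h3, smul_mul_smul_comm, smul_mul_smul_comm]
  have stepA : (p ⊗ₜ[K] g + c • ((1 : A) ⊗ₜ[K] p)) * (s ⊗ₜ[K] g - (1 : A) ⊗ₜ[K] s)
      = -(c • (p ⊗ₜ[K] s)) - c • (s ⊗ₜ[K] p) := by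
    simp only [add_mul, mul_sub, smul_mul_assoc, mul_smul_comm,
      Algebra.TensorProduct.tmul_mul_tmul, hps, hgs2, hpg, one_mul, mul_one,
      TensorProduct.tmul_smul, ← TensorProduct.smul_tmul', TensorProduct.zero_tmul,
      TensorProduct.tmul_zero, TensorProduct.tmul_neg, smul_zero]
    module
  have key : (p ⊗ₜ[K] g + c • ((1 : A) ⊗ₜ[K] p)) * (s ⊗ₜ[K] g - (1 : A) ⊗ₜ[K] s)
      * (p ⊗ₜ[K] g + c • ((1 : A) ⊗ₜ[K] s)) = 0 := by
    rw [stepA]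
    simp only [sub_mul, neg_mul, smul_mul_assoc, mul_add, mul_smul_comm,
      Algebra.TensorProduct.tmul_mul_tmul, hpp, hsg, hss, hsp, hps, one_mul, mul_one,
      TensorProduct.tmul_smul, ← TensorProduct.smul_tmul', TensorProduct.zero_tmul,
      TensorProduct.tmul_zero, TensorProduct.neg_tmul, TensorProduct.tmul_neg, smul_zero,
      smul_neg, smul_smul]
    module
  rw [key, smul_zero]
end

section
/- Let K be a field, let q ∈ K be nonzero, and let A be an associative unital K-algebra. Suppose a ∈ A satisfies a² = a. Set g = (1 + q⁻²)a − 1, g' = (q² + 1)a − 1, and in A ⊗_K A set G̃ = q·(g ⊗ g), G̃' = q⁻¹·(g' ⊗ g'), and Ẽ = (q + q⁻¹)²·(a ⊗ a). Then G̃ G̃' = G̃' G̃ = 1 (so G̃' = G̃⁻¹), and the BMW skein relation holds: (q − q⁻¹)·(1 − Ẽ) = G̃ − G̃'. -/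
open scoped TensorProduct

/-- Lemma 5.4(2): for an idempotent `a`, `g = (1+q⁻²)a - 1` with inverse
`g' = (q²+1)a - 1`, `G̃ = q (g ⊗ g)`, `G̃' = q⁻¹ (g' ⊗ g')`, and
`Ẽ = (q+q⁻¹)² (a ⊗ a)` in `A ⊗[K] A`: `G̃ G̃' = G̃' G̃ = 1` and the BMW skein
relation `(q - q⁻¹)(1 - Ẽ) = G̃ - G̃'` holds. -/
theorem bmw_skein_relation (K : Type*) [Field K] (A : Type*) [Ring A] [Algebra K A]
    (q : K) (hq : q ≠ 0) (a : A) (ha : a * a = a) :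
    (q • (((1 + q⁻¹ ^ 2) • a - 1) ⊗ₜ[K] ((1 + q⁻¹ ^ 2) • a - 1)))
        * (q⁻¹ • (((q ^ 2 + 1) • a - 1) ⊗ₜ[K] ((q ^ 2 + 1) • a - 1))) = 1 ∧
    (q⁻¹ • (((q ^ 2 + 1) • a - 1) ⊗ₜ[K] ((q ^ 2 + 1) • a - 1)))
        * (q • (((1 + q⁻¹ ^ 2) • a - 1) ⊗ₜ[K] ((1 + q⁻¹ ^ 2) • a - 1))) = 1 ∧
    (q - q⁻¹) • ((1 : A ⊗[K] A) - ((q + q⁻¹) ^ 2) • (a ⊗ₜ[K] a))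
      = q • (((1 + q⁻¹ ^ 2) • a - 1) ⊗ₜ[K] ((1 + q⁻¹ ^ 2) • a - 1))
        - q⁻¹ • (((q ^ 2 + 1) • a - 1) ⊗ₜ[K] ((q ^ 2 + 1) • a - 1)) := by
  have mulexp : ∀ s t : K, ((s • a - 1) * (t • a - 1) : A)
      = (s * t - s - t) • a + 1 := by
    intro s t
    simp only [sub_mul, mul_sub, smul_mul_assoc, mul_smul_comm, smul_smul, ha,
      one_mul, mul_one]
    module
  have hgg' : ((1 + q⁻¹ ^ 2) • a - 1) * ((q ^ 2 + 1) • a - 1) = 1 := by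
    rw [mulexp]
    have h0 : (1 + q⁻¹ ^ 2) * (q ^ 2 + 1) - (1 + q⁻¹ ^ 2) - (q ^ 2 + 1) = 0 := by
      field_simp
      ring
    rw [h0, zero_smul, zero_add]
  have hg'g : ((q ^ 2 + 1) • a - 1) * ((1 + q⁻¹ ^ 2) • a - 1) = 1 := by
    rw [mulexp]
    have h0 : (q ^ 2 + 1) * (1 + q⁻¹ ^ 2) - (q ^ 2 + 1) - (1 + q⁻¹ ^ 2) = 0 := by
      field_simp
      ring
    rw [h0, zero_smul, zero_add]
  refine ⟨?_, ?_, ?_⟩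
  · rw [smul_mul_smul_comm, Algebra.TensorProduct.tmul_mul_tmul, hgg',
      mul_inv_cancel₀ hq]
    simp [Algebra.TensorProduct.one_def]
  · rw [smul_mul_smul_comm, Algebra.TensorProduct.tmul_mul_tmul, hg'g,
      inv_mul_cancel₀ hq]
    simp [Algebra.TensorProduct.one_def]
  · have expand : ∀ s : K, ((s • a - 1) ⊗ₜ[K] (s • a - 1))
        = (s * s) • (a ⊗ₜ[K] a) - s • (a ⊗ₜ[K] (1:A)) - s • ((1:A) ⊗ₜ[K] a)
          + (1:A) ⊗ₜ[K] (1:A) := by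
      intro s
      simp only [TensorProduct.sub_tmul, TensorProduct.tmul_sub,
        ← TensorProduct.smul_tmul', TensorProduct.tmul_smul, smul_smul]
      module
    rw [expand, expand, Algebra.TensorProduct.one_def]
    match_scalars <;> field_simp <;> ring
end

section
/- Let K be a field, let q ∈ K be nonzero with q² + 1 ≠ 0, and let A be an associative unital K-algebra. Suppose a, b ∈ A satisfy a² = a, b² = b, and bab = (q + q⁻¹)⁻² b. Set g = (1 + q⁻²)a − 1, g' = (q² + 1)a − 1, and in A ⊗_K A set G̃ = q·(g ⊗ g), G̃' = q⁻¹·(g' ⊗ g'), and Ẽ_b = (q + q⁻¹)²·(b ⊗ b). Then Ẽ_b G̃ Ẽ_b = q³ Ẽ_b and Ẽ_b G̃' Ẽ_b = q⁻³ Ẽ_b; that is, the BMW relation (R2) E_i G_{i−1}^{±1} E_i = r^{±1} E_i holds with r = q³. -/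
open scoped TensorProduct

/-!
Both relations reduce to one computation in `A`: since `b` is idempotent and `b a b = t b`
with `t = (q + q⁻¹)⁻²`, every element `s a - 1` is sandwiched by `b` to a scalar multiple,
`b (s a - 1) b = (s t - 1) b`. In `A ⊗ A` the sandwich of a pure tensor is the tensor of the
sandwiches, so `Ẽ_b G̃^{±1} Ẽ_b` is a scalar multiple of `Ẽ_b`, and the scalar is `q^{±3}`.
-/

section Sandwich

variable {R : Type*} [CommRing R] {A B : Type*} [Ring A] [Algebra R A] [Ring B] [Algebra R B]

theorem IsIdempotentElem.mul_smul_sub_one_mul {a b : A} {t : R} (hb : IsIdempotentElem b)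
    (hbab : b * a * b = t • b) (s : R) : b * (s • a - 1) * b = (s * t - 1) • b := by
  rw [mul_sub, sub_mul, mul_one, hb.eq, mul_smul_comm, smul_mul_assoc, hbab, smul_smul,
    sub_smul, one_smul]

theorem smul_tmul_mul_smul_tmul_mul_smul_tmul {b x : A} {b' x' : B} {μ μ' : R}
    (hx : b * x * b = μ • b) (hx' : b' * x' * b' = μ' • b') (c s : R) :
    (c • (b ⊗ₜ[R] b')) * (s • (x ⊗ₜ[R] x')) * (c • (b ⊗ₜ[R] b'))
      = (s * (c * (μ * μ'))) • (c • (b ⊗ₜ[R] b')) := by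
  simp only [smul_mul_assoc, mul_smul_comm, Algebra.TensorProduct.tmul_mul_tmul, hx, hx',
    TensorProduct.smul_tmul', TensorProduct.tmul_smul, smul_smul]
  ring_nf

end Sandwich

section Scalars

variable {K : Type*} [Field K] {q : K}

theorem bmw_R2_scalar (hq : q ≠ 0) (hq2 : q ^ 2 + 1 ≠ 0) :
    (q + q⁻¹) ^ 2 * ((1 + q⁻¹ ^ 2) * ((q + q⁻¹) ^ 2)⁻¹ - 1) ^ 2 = q ^ 2 := by
  field_simp
  ring

theorem bmw_R2_scalar_inv (hq : q ≠ 0) (hq2 : q ^ 2 + 1 ≠ 0) :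
    (q + q⁻¹) ^ 2 * ((q ^ 2 + 1) * ((q + q⁻¹) ^ 2)⁻¹ - 1) ^ 2 = q⁻¹ ^ 2 := by
  field_simp
  ring

end Scalars

theorem bmw_R2_relation_general (K : Type*) [Field K] (A : Type*) [Ring A] [Algebra K A]
    (q : K) (hq : q ≠ 0) (hq2 : q ^ 2 + 1 ≠ 0)
    (a b : A) (hb : b * b = b)
    (hbab : b * a * b = ((q + q⁻¹) ^ 2)⁻¹ • b) :
    (((q + q⁻¹) ^ 2) • (b ⊗ₜ[K] b))
        * (q • (((1 + q⁻¹ ^ 2) • a - 1) ⊗ₜ[K] ((1 + q⁻¹ ^ 2) • a - 1)))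
        * (((q + q⁻¹) ^ 2) • (b ⊗ₜ[K] b))
      = q ^ 3 • (((q + q⁻¹) ^ 2) • (b ⊗ₜ[K] b)) ∧
    (((q + q⁻¹) ^ 2) • (b ⊗ₜ[K] b))
        * (q⁻¹ • (((q ^ 2 + 1) • a - 1) ⊗ₜ[K] ((q ^ 2 + 1) • a - 1)))
        * (((q + q⁻¹) ^ 2) • (b ⊗ₜ[K] b))
      = q⁻¹ ^ 3 • (((q + q⁻¹) ^ 2) • (b ⊗ₜ[K] b)) := by
  have hg := IsIdempotentElem.mul_smul_sub_one_mul hb hbab (1 + q⁻¹ ^ 2)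
  have hg' := IsIdempotentElem.mul_smul_sub_one_mul hb hbab (q ^ 2 + 1)
  constructor
  · rw [smul_tmul_mul_smul_tmul_mul_smul_tmul hg hg, ← sq, bmw_R2_scalar hq hq2, ← pow_succ']
  · rw [smul_tmul_mul_smul_tmul_mul_smul_tmul hg' hg', ← sq, bmw_R2_scalar_inv hq hq2,
      ← pow_succ']

/-- Lemma 5.4(3): for idempotents `a, b` with `b a b = (q+q⁻¹)⁻² b`
(adjacent Temperley-Lieb generators), `g = (1+q⁻²)a - 1` with inverse
`g' = (q²+1)a - 1`, `G̃ = q (g ⊗ g)`, `G̃' = q⁻¹ (g' ⊗ g')`, and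
`Ẽ_b = (q+q⁻¹)² (b ⊗ b)` in `A ⊗[K] A`, the BMW relation (R2) with `r = q³`
holds: `Ẽ_b G̃ Ẽ_b = q³ Ẽ_b` and `Ẽ_b G̃' Ẽ_b = q⁻³ Ẽ_b`. -/
theorem bmw_R2_relation (K : Type*) [Field K] (A : Type*) [Ring A] [Algebra K A]
    (q : K) (hq : q ≠ 0) (hq2 : q ^ 2 + 1 ≠ 0)
    (a b : A) (ha : a * a = a) (hb : b * b = b)
    (hbab : b * a * b = ((q + q⁻¹) ^ 2)⁻¹ • b) :
    (((q + q⁻¹) ^ 2) • (b ⊗ₜ[K] b))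
        * (q • (((1 + q⁻¹ ^ 2) • a - 1) ⊗ₜ[K] ((1 + q⁻¹ ^ 2) • a - 1)))
        * (((q + q⁻¹) ^ 2) • (b ⊗ₜ[K] b))
      = q ^ 3 • (((q + q⁻¹) ^ 2) • (b ⊗ₜ[K] b)) ∧
    (((q + q⁻¹) ^ 2) • (b ⊗ₜ[K] b))
        * (q⁻¹ • (((q ^ 2 + 1) • a - 1) ⊗ₜ[K] ((q ^ 2 + 1) • a - 1)))
        * (((q + q⁻¹) ^ 2) • (b ⊗ₜ[K] b))
      = q⁻¹ ^ 3 • (((q + q⁻¹) ^ 2) • (b ⊗ₜ[K] b)) :=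
  bmw_R2_relation_general K A q hq hq2 a b hb hbab
end
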